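/- arXiv:1905.01166 — 9 statements merged into one kernel-verified Lean document; each statement's English description precedes it below -/
import Mathlib

section
/- For every l ≥ 1 and every real R ≥ 2^l, the number of tuples (n_1,...,n_l) of integers with each n_i ≥ 2 and product n_1⋯n_l ≤ R is at least R/(3·2^(l-1)). -/
theorem stmt_1 (l : ℕ) (hl : 1 ≤ l) (R : ℝ) (hR : (2 : ℝ) ^ l ≤ R) :
    R / (3 * 2 ^ (l - 1)) ≤
      (({n : Fin l → ℕ | (∀ i, 2 ≤ n i) ∧ (∏ i, (n i : ℝ)) ≤ R}.ncard) : ℝ) := by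
  obtain ⟨m, rfl⟩ : ∃ m, l = m + 1 := ⟨l - 1, (Nat.succ_pred_eq_of_pos hl).symm⟩
  simp only [Nat.add_sub_cancel]
  set S : Set (Fin (m+1) → ℕ) := {n | (∀ i, 2 ≤ n i) ∧ (∏ i, (n i : ℝ)) ≤ R} with hS
  have h2m : (0:ℝ) < 2 ^ m := by positivity
  have hRpos : (0:ℝ) < R := lt_of_lt_of_le (by positivity) hR
  set N : ℕ := ⌊R / 2 ^ m⌋₊ with hNdef
  have hx2 : (2:ℝ) ≤ R / 2 ^ m := by
    rw [le_div_iff₀ h2m]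
    calc (2:ℝ) * 2^m = 2^(m+1) := by ring
    _ ≤ R := hR
  have hN2 : 2 ≤ N := Nat.le_floor (by exact_mod_cast hx2)
  -- the injection
  set f : ℕ → (Fin (m+1) → ℕ) := fun n => Fin.cons n (fun _ => 2) with hf
  have hfinj : Function.Injective f := by
    intro a b hab
    have := congrFun hab 0
    simpa [hf] using this
  have hprod : ∀ n : ℕ, (∏ i, ((f n i : ℕ) : ℝ)) = n * 2 ^ m := by
    intro n
    rw [Fin.prod_univ_succ]
    simp [hf, Finset.prod_const]
  have hsub : ↑((Finset.Icc 2 N).image f) ⊆ S := by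
    intro x hx
    simp only [Finset.coe_image, Set.mem_image, Finset.mem_coe, Finset.mem_Icc] at hx
    obtain ⟨n, ⟨hn2, hnN⟩, rfl⟩ := hx
    constructor
    · intro i
      refine Fin.cases ?_ ?_ i
      · simpa [hf] using hn2
      · intro j; simp [hf]
    · rw [hprod]
      have hnx : (n : ℝ) ≤ R / 2 ^ m := by
        calc (n : ℝ) ≤ (N : ℝ) := by exact_mod_cast hnN
        _ ≤ R / 2 ^ m := Nat.floor_le (by positivity)
      calc (n : ℝ) * 2 ^ m ≤ (R / 2 ^ m) * 2 ^ m := by nlinarith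
      _ = R := by field_simp
  -- S is finite
  have hSfin : S.Finite := by
    apply Set.Finite.subset (Set.Finite.pi (fun i : Fin (m+1) => Set.finite_Icc 2 ⌊R⌋₊))
    intro n hn
    obtain ⟨hn2, hnR⟩ := hn
    intro i _
    have h1 : n i ≤ ∏ j, n j :=
      Finset.single_le_prod' (fun j _ => le_trans one_le_two (hn2 j)) (Finset.mem_univ i)
    have h2 : ((∏ j, n j : ℕ) : ℝ) ≤ R := by push_cast; exact hnR
    exact Set.mem_Icc.2 ⟨hn2 i, le_trans h1 (Nat.le_floor h2)⟩
  have hcard : N - 1 ≤ S.ncard := by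
    have := Set.ncard_le_ncard hsub hSfin
    rw [Set.ncard_coe_finset] at this
    rw [Finset.card_image_of_injective _ hfinj, Nat.card_Icc] at this
    omega
  have hcast : ((N : ℝ) - 1) ≤ (S.ncard : ℝ) := by
    have : ((N - 1 : ℕ) : ℝ) ≤ (S.ncard : ℝ) := by exact_mod_cast hcard
    rwa [Nat.cast_sub (by omega), Nat.cast_one] at this
  refine le_trans ?_ hcast
  -- arithmetic: R / (3 * 2^m) ≤ N - 1, where N = ⌊R/2^m⌋₊, R/2^m ≥ 2
  set x : ℝ := R / 2 ^ m with hxdef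
  have hxN : (N : ℝ) ≤ x := Nat.floor_le (by positivity)
  have hNx : x < N + 1 := Nat.lt_floor_add_one x
  have hrw : R / (3 * 2 ^ m) = x / 3 := by
    rw [hxdef, mul_comm, ← div_div]
  rw [hrw]
  rcases le_or_gt x 3 with h3 | h3
  · have : (2:ℝ) ≤ N := by exact_mod_cast hN2
    linarith
  · linarith
end

section
/- For every fixed N ∈ ℕ with N ≥ 1 and fixed l ≥ 1, the limit as R → ∞ of K_N(R,l)/(R·(ln R)^(l-1)) equals 1/(l-1)!, where K_N(R,l) is the number of l-tuples (n_1,...,n_l) with each n_i ≥ N and ∏ n_j ≤ R. -/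
/-!
Write `A_k(X)` for the number of `k`-tuples of integers `≥ N` with product `≤ X`, and `B_k(X)`
for the sum of the reciprocals of their products (`#(tuples N k X)` and `recipSum N k X`).
Fixing the last `k` coordinates `w` of a `(k + 1)`-tuple leaves `⌊X / ∏ w⌋ + 1 - N` choices for
the first one, whence `X B_k(X / N) - N A_k(X / N) ≤ A_{k+1}(X) ≤ X B_k(X / N)`. Fixing the first
coordinate instead gives `B_{k+1}(X) = ∑_{N ≤ n ≤ X} B_k(X / n) / n`; comparing
`∑ log (Y / n) ^ k / n` with the telescoping sum of `log (Y / n) ^ (k + 1) / (k + 1)` then shows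
by induction that `log (X / N ^ k) ^ k / k! ≤ B_k(X) ≤ (log X + k) ^ k / k!`. Both bounds are
`∼ (log X) ^ k / k!`, and the upper one also gives `A_k(X) = O(X (log X) ^ (k - 1))`, so
`N A_k(X / N)` is negligible.
-/

open Finset Real Filter Topology
open scoped Nat

section

variable {α : Type*} [CommRing α] [LinearOrder α] [IsStrictOrderedRing α] {u v : α}

lemma succ_mul_pow_mul_sub_le_pow_sub_pow (hv : 0 ≤ v) (hvu : v ≤ u) (k : ℕ) :
    (k + 1) * v ^ k * (u - v) ≤ u ^ (k + 1) - v ^ (k + 1) := by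
  rw [← geom_sum₂_mul, Nat.add_sub_cancel]
  refine mul_le_mul_of_nonneg_right ?_ (sub_nonneg.2 hvu)
  calc (k + 1) * v ^ k = ∑ i ∈ range (k + 1), v ^ i * v ^ (k - i) := by
        rw [sum_congr rfl fun i hi => by
            rw [← pow_add, Nat.add_sub_cancel' (mem_range_succ_iff.1 hi)],
          sum_const, card_range, nsmul_eq_mul, Nat.cast_succ]
    _ ≤ ∑ i ∈ range (k + 1), u ^ i * v ^ (k - i) := by gcongr

lemma pow_sub_pow_le_succ_mul_pow_mul_sub (hv : 0 ≤ v) (hvu : v ≤ u) (k : ℕ) :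
    u ^ (k + 1) - v ^ (k + 1) ≤ (k + 1) * u ^ k * (u - v) := by
  have := abs_pow_sub_pow_le u v (k + 1)
  rw [abs_of_nonneg (sub_nonneg.2 (pow_le_pow_left₀ hv hvu _)), abs_of_nonneg (sub_nonneg.2 hvu),
    abs_of_nonneg (hv.trans hvu), abs_of_nonneg hv, max_eq_left hvu, Nat.add_sub_cancel] at this
  push_cast at this
  linarith

end

lemma inv_add_one_le_log_add_one_sub_log {x : ℝ} (hx : 0 < x) :
    (x + 1)⁻¹ ≤ log (x + 1) - log x := by
  have := one_sub_inv_le_log_of_pos (x := (x + 1) / x) (by positivity)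
  rw [log_div (by positivity) hx.ne', inv_div] at this
  have h : 1 - x / (x + 1) = (x + 1)⁻¹ := by field_simp; ring
  linarith

lemma log_add_one_sub_log_le_inv {x : ℝ} (hx : 0 < x) : log (x + 1) - log x ≤ x⁻¹ := by
  have := log_le_sub_one_of_pos (x := (x + 1) / x) (by positivity)
  rw [log_div (by positivity) hx.ne'] at this
  have h : (x + 1) / x - 1 = x⁻¹ := by field_simp; ring
  linarith

lemma log_div_sub_log_div_succ {Y : ℝ} (hY : 0 < Y) {n : ℕ} (hn : 0 < n) :
    log (Y / n) - log (Y / (n + 1 : ℕ)) = log (n + 1) - log n := by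
  have : (0 : ℝ) < n := by exact_mod_cast hn
  rw [log_div hY.ne' this.ne', log_div hY.ne' (by positivity)]
  push_cast
  ring

theorem pow_succ_log_div_le_sum (k : ℕ) {N : ℕ} (hN : 1 ≤ N) {Y : ℝ} (hNY : (N : ℝ) ≤ Y) :
    log (Y / N) ^ (k + 1) / (k + 1) ≤ ∑ n ∈ Icc N ⌊Y⌋₊, log (Y / n) ^ k / n := by
  -- clipping at `0` makes the telescoping sum end with `G (⌊Y⌋₊ + 1) = 0`
  set G : ℕ → ℝ := fun n => max (log (Y / n)) 0 ^ (k + 1) with hG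
  have hY : 0 < Y := lt_of_lt_of_le (by exact_mod_cast hN) hNY
  have hstep : ∀ n ∈ Icc N ⌊Y⌋₊, -(G (n + 1) - G n) ≤ (k + 1) * (log (Y / n) ^ k / n) := by
    intro n hn
    have hn0 : (0 : ℝ) < n := by exact_mod_cast hN.trans (mem_Icc.1 hn).1
    have hu : 0 ≤ log (Y / n) :=
      log_nonneg ((one_le_div hn0).2 ((Nat.le_floor_iff hY.le).1 (mem_Icc.1 hn).2))
    have hvu : max (log (Y / (n + 1 : ℕ))) 0 ≤ log (Y / n) :=
      max_le (by linarith [log_div_sub_log_div_succ hY (Nat.cast_pos.1 hn0),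
        inv_add_one_le_log_add_one_sub_log hn0, inv_pos.2 (by linarith : (0 : ℝ) < n + 1)]) hu
    have hgap : log (Y / n) - max (log (Y / (n + 1 : ℕ))) 0 ≤ (n : ℝ)⁻¹ := by
      linarith [le_max_left (log (Y / (n + 1 : ℕ))) 0,
        log_div_sub_log_div_succ hY (Nat.cast_pos.1 hn0), log_add_one_sub_log_le_inv hn0]
    calc -(G (n + 1) - G n)
        = log (Y / n) ^ (k + 1) - max (log (Y / (n + 1 : ℕ))) 0 ^ (k + 1) := by
          simp only [hG, max_eq_left hu]; ring
      _ ≤ (k + 1) * log (Y / n) ^ k * (log (Y / n) - max (log (Y / (n + 1 : ℕ))) 0) :=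
          pow_sub_pow_le_succ_mul_pow_mul_sub (le_max_right _ _) hvu k
      _ ≤ (k + 1) * log (Y / n) ^ k * (n : ℝ)⁻¹ := by gcongr
      _ = (k + 1) * (log (Y / n) ^ k / n) := by ring
  have hlast : G (⌊Y⌋₊ + 1) = 0 := by
    have : log (Y / (⌊Y⌋₊ + 1 : ℕ)) < 0 :=
      log_neg (by positivity) ((div_lt_one (by positivity)).2 (by
        push_cast; exact Nat.lt_floor_add_one Y))
    rw [hG]
    beta_reduce
    rw [max_eq_right this.le, zero_pow k.succ_ne_zero]
  have hfirst : G N = log (Y / N) ^ (k + 1) := by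
    simp only [hG, max_eq_left (log_nonneg ((one_le_div (by exact_mod_cast hN)).2 hNY))]
  have hsum := sum_le_sum hstep
  rw [sum_neg_distrib, sum_Icc_sub (Nat.le_floor hNY), ← mul_sum, hlast, hfirst] at hsum
  rw [div_le_iff₀ (by positivity)]
  linarith

theorem sum_pow_log_div_le (k : ℕ) {Y : ℝ} (hY : 1 ≤ Y) :
    ∑ n ∈ Icc 1 ⌊Y⌋₊, log (Y / n) ^ k / n ≤ (log Y + 1) ^ (k + 1) / (k + 1) := by
  set H : ℕ → ℝ := fun n => log (Y / n) ^ (k + 1) with hH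
  have hY0 : 0 < Y := by linarith
  have hM : 1 ≤ ⌊Y⌋₊ := Nat.le_floor (by simpa using hY)
  have hstep : ∀ n ∈ Ico 1 ⌊Y⌋₊,
      (k + 1) * (log (Y / (n + 1 : ℕ)) ^ k / (n + 1 : ℕ)) ≤ -(H (n + 1) - H n) := by
    intro n hn
    have hn0 : (0 : ℝ) < n := by exact_mod_cast (mem_Ico.1 hn).1
    have hv : 0 ≤ log (Y / (n + 1 : ℕ)) :=
      log_nonneg ((one_le_div (by positivity)).2 ((Nat.le_floor_iff hY0.le).1 (mem_Ico.1 hn).2))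
    have hgap := log_div_sub_log_div_succ hY0 (Nat.cast_pos.1 hn0)
    have hgap' := inv_add_one_le_log_add_one_sub_log hn0
    have hvu : log (Y / (n + 1 : ℕ)) ≤ log (Y / n) := by
      linarith [inv_pos.2 (by linarith : (0 : ℝ) < n + 1)]
    calc (k + 1) * (log (Y / (n + 1 : ℕ)) ^ k / (n + 1 : ℕ))
        = (k + 1) * log (Y / (n + 1 : ℕ)) ^ k * ((n : ℝ) + 1)⁻¹ := by push_cast; ring
      _ ≤ (k + 1) * log (Y / (n + 1 : ℕ)) ^ k * (log (Y / n) - log (Y / (n + 1 : ℕ))) := by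
          rw [hgap]; gcongr
      _ ≤ log (Y / n) ^ (k + 1) - log (Y / (n + 1 : ℕ)) ^ (k + 1) :=
          succ_mul_pow_mul_sub_le_pow_sub_pow hv hvu k
      _ = -(H (n + 1) - H n) := by simp only [hH]; ring
  have hsum := sum_le_sum hstep
  rw [sum_neg_distrib, sum_Ico_sub _ hM, ← mul_sum] at hsum
  have hlast : 0 ≤ H ⌊Y⌋₊ :=
    pow_nonneg (log_nonneg ((one_le_div (by positivity)).2 (Nat.floor_le hY0.le))) _
  have hsplit : ∑ n ∈ Icc 1 ⌊Y⌋₊, log (Y / n) ^ k / n =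
      log Y ^ k + ∑ n ∈ Ico 1 ⌊Y⌋₊, log (Y / (n + 1 : ℕ)) ^ k / (n + 1 : ℕ) := by
    rw [← Ico_add_one_right_eq_Icc, sum_eq_sum_Ico_succ_bot (by omega),
      sum_Ico_add' (fun n : ℕ => log (Y / n) ^ k / n)]
    simp
  have hbinom := succ_mul_pow_mul_sub_le_pow_sub_pow (log_nonneg hY) (le_add_of_nonneg_right
    zero_le_one) k
  rw [hsplit, le_div_iff₀ (by positivity)]
  simp only [hH, Nat.cast_one, div_one] at hsum
  linarith

lemma tendsto_log_add_pow_div_log_pow (c : ℝ) (k : ℕ) :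
    Tendsto (fun X => (log X + c) ^ k / log X ^ k) atTop (𝓝 1) := by
  have h : Tendsto (fun X => 1 + c * (log X)⁻¹) atTop (𝓝 1) := by
    simpa using tendsto_const_nhds.add
      ((tendsto_inv_atTop_zero.comp tendsto_log_atTop).const_mul c)
  refine (by simpa using h.pow k : Tendsto (fun X => (1 + c * (log X)⁻¹) ^ k) atTop (𝓝 1)).congr'
    ?_
  filter_upwards [tendsto_log_atTop.eventually_gt_atTop 0] with X hX
  rw [← div_pow]
  congr 1
  field_simp

namespace BoundedProduct

noncomputable def tuples (N k : ℕ) (X : ℝ) : Finset (Fin k → ℕ) :=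
  {v ∈ Fintype.piFinset fun _ => Icc N ⌊X⌋₊ | ∏ i, (v i : ℝ) ≤ X}

noncomputable def recipSum (N k : ℕ) (X : ℝ) : ℝ :=
  ∑ v ∈ tuples N k X, (∏ i, (v i : ℝ))⁻¹

variable {N k : ℕ} {X Y : ℝ}

lemma one_le_prod_cast (hN : 1 ≤ N) {v : Fin k → ℕ} (hv : ∀ i, N ≤ v i) :
    1 ≤ ∏ i, (v i : ℝ) :=
  one_le_prod fun i _ => by exact_mod_cast hN.trans (hv i)

lemma mem_tuples (hN : 1 ≤ N) {v : Fin k → ℕ} :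
    v ∈ tuples N k X ↔ (∀ i, N ≤ v i) ∧ ∏ i, (v i : ℝ) ≤ X := by
  simp only [tuples, mem_filter, Fintype.mem_piFinset, mem_Icc, forall_and]
  refine ⟨fun h => ⟨h.1.1, h.2⟩, fun ⟨hv, hX⟩ => ⟨⟨hv, fun i => Nat.le_floor ?_⟩, hX⟩⟩
  have : v i ≤ ∏ j, v j := single_le_prod' (fun j _ => hN.trans (hv j)) (mem_univ i)
  exact le_trans (by exact_mod_cast this) hX

lemma tuples_mono (hN : 1 ≤ N) (h : X ≤ Y) : tuples N k X ⊆ tuples N k Y := fun v hv => by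
  rw [mem_tuples hN] at hv ⊢
  exact ⟨hv.1, hv.2.trans h⟩

lemma recipSum_nonneg : 0 ≤ recipSum N k X :=
  sum_nonneg fun _ _ => by positivity

lemma recipSum_mono (hN : 1 ≤ N) (h : X ≤ Y) : recipSum N k X ≤ recipSum N k Y :=
  sum_le_sum_of_subset_of_nonneg (tuples_mono hN h) fun _ _ _ => by positivity

lemma card_tuples_zero_le : #(tuples N 0 X) ≤ 1 :=
  card_le_one_of_subsingleton _

lemma recipSum_zero_le : recipSum N 0 X ≤ 1 := by
  simpa [recipSum] using card_tuples_zero_le (N := N) (X := X)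

lemma recipSum_zero (hN : 1 ≤ N) (hX : 1 ≤ X) : recipSum N 0 X = 1 := by
  have : tuples N 0 X = univ := eq_univ_of_forall fun v => by simpa [mem_tuples hN] using hX
  simp [recipSum, this]

lemma cons_mem_tuples (hN : 1 ≤ N) {n : ℕ} {w : Fin k → ℕ} :
    Fin.cons n w ∈ tuples N (k + 1) X ↔ n ∈ Icc N ⌊X⌋₊ ∧ w ∈ tuples N k (X / n) := by
  simp only [mem_tuples hN, Fin.forall_fin_succ, Fin.cons_zero, Fin.cons_succ,
    Fin.prod_univ_succ, mem_Icc]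
  constructor
  · rintro ⟨⟨hn, hw⟩, hX⟩
    have hn0 : (0 : ℝ) < n := by exact_mod_cast hN.trans hn
    refine ⟨⟨hn, Nat.le_floor ?_⟩, hw, by rwa [le_div_iff₀' hn0]⟩
    exact le_trans (le_mul_of_one_le_right hn0.le (one_le_prod_cast hN hw)) hX
  · rintro ⟨⟨hn, -⟩, hw, hX⟩
    have hn0 : (0 : ℝ) < n := by exact_mod_cast hN.trans hn
    exact ⟨⟨hn, hw⟩, by rwa [le_div_iff₀' hn0] at hX⟩

lemma sum_tuples_succ {M : Type*} [AddCommMonoid M] (hN : 1 ≤ N) (g : (Fin (k + 1) → ℕ) → M) :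
    ∑ v ∈ tuples N (k + 1) X, g v =
      ∑ n ∈ Icc N ⌊X⌋₊, ∑ w ∈ tuples N k (X / n), g (Fin.cons n w) := by
  rw [sum_sigma']
  refine sum_nbij' (fun v => ⟨v 0, Fin.tail v⟩) (fun p => Fin.cons p.1 p.2) ?_ ?_ ?_ ?_ ?_
  · intro v hv
    rw [← Fin.cons_self_tail v, cons_mem_tuples hN] at hv
    simpa using hv
  · intro p hp
    simpa [cons_mem_tuples hN] using hp
  · intro v _; exact Fin.cons_self_tail v
  · intro p _; simp
  · intro v _; rw [Fin.cons_self_tail]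

lemma mem_Icc_and_mem_tuples_div_iff (hN : 1 ≤ N) {n : ℕ} {w : Fin k → ℕ} :
    n ∈ Icc N ⌊X⌋₊ ∧ w ∈ tuples N k (X / n) ↔
      n ∈ Icc N ⌊X / ∏ i, (w i : ℝ)⌋₊ ∧ w ∈ tuples N k (X / N) := by
  rw [← cons_mem_tuples hN, mem_tuples hN, mem_tuples hN, mem_Icc, Fin.prod_univ_succ,
    Fin.forall_fin_succ]
  simp only [Fin.cons_zero, Fin.cons_succ]
  have hN0 : (0 : ℝ) < N := by exact_mod_cast hN
  constructor
  · rintro ⟨⟨hn, hw⟩, hX⟩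
    have hp := one_le_prod_cast hN hw
    refine ⟨⟨hn, (Nat.le_floor_iff' (by omega)).2 ?_⟩, hw, ?_⟩
    · rwa [le_div_iff₀ (by positivity)]
    · rw [le_div_iff₀' hN0]
      exact le_trans (by gcongr) hX
  · rintro ⟨⟨hn, hnX⟩, hw, -⟩
    have hp := one_le_prod_cast hN hw
    rw [Nat.le_floor_iff' (by omega), le_div_iff₀ (by positivity)] at hnX
    exact ⟨⟨hn, hw⟩, hnX⟩

lemma sum_tuples_succ' {M : Type*} [AddCommMonoid M] (hN : 1 ≤ N)
    (g : (Fin (k + 1) → ℕ) → M) :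
    ∑ v ∈ tuples N (k + 1) X, g v =
      ∑ w ∈ tuples N k (X / N), ∑ n ∈ Icc N ⌊X / ∏ i, (w i : ℝ)⌋₊, g (Fin.cons n w) :=
  (sum_tuples_succ hN g).trans (sum_comm' fun _ _ => mem_Icc_and_mem_tuples_div_iff hN)

lemma recipSum_succ (hN : 1 ≤ N) :
    recipSum N (k + 1) X = ∑ n ∈ Icc N ⌊X⌋₊, (n : ℝ)⁻¹ * recipSum N k (X / n) := by
  simp only [recipSum, sum_tuples_succ hN, Fin.prod_univ_succ, Fin.cons_zero, Fin.cons_succ,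
    mul_inv, mul_sum]

lemma le_div_prod_of_mem_tuples_div (hN : 1 ≤ N) {w : Fin k → ℕ}
    (hw : w ∈ tuples N k (X / N)) : (N : ℝ) ≤ X / ∏ i, (w i : ℝ) := by
  rw [mem_tuples hN] at hw
  rw [le_div_iff₀ (by linarith [one_le_prod_cast hN hw.1]),
    ← le_div_iff₀' (by exact_mod_cast hN : (0 : ℝ) < N)]
  exact hw.2

lemma card_tuples_succ (hN : 1 ≤ N) :
    (#(tuples N (k + 1) X) : ℝ) =
      ∑ w ∈ tuples N k (X / N), ((⌊X / ∏ i, (w i : ℝ)⌋₊ : ℝ) + 1 - N) := by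
  rw [card_eq_sum_ones, sum_tuples_succ' hN, Nat.cast_sum]
  refine sum_congr rfl fun w hw => ?_
  have : N ≤ ⌊X / ∏ i, (w i : ℝ)⌋₊ + 1 :=
    Nat.le_succ_of_le (Nat.le_floor (le_div_prod_of_mem_tuples_div hN hw))
  simp [Nat.card_Icc, Nat.cast_sub this]

lemma card_tuples_succ_le (hN : 1 ≤ N) :
    (#(tuples N (k + 1) X) : ℝ) ≤ X * recipSum N k (X / N) := by
  rw [card_tuples_succ hN, recipSum, mul_sum]
  refine sum_le_sum fun w hw => ?_
  have hX : 0 ≤ X / ∏ i, (w i : ℝ) :=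
    (Nat.cast_nonneg N).trans (le_div_prod_of_mem_tuples_div hN hw)
  have hN1 : (1 : ℝ) ≤ N := by exact_mod_cast hN
  linarith [Nat.floor_le hX, div_eq_mul_inv X (∏ i, (w i : ℝ))]

lemma sub_le_card_tuples_succ (hN : 1 ≤ N) :
    X * recipSum N k (X / N) - N * #(tuples N k (X / N)) ≤ #(tuples N (k + 1) X) := by
  rw [card_tuples_succ hN, recipSum, mul_sum, card_eq_sum_ones, Nat.cast_sum, mul_sum,
    ← sum_sub_distrib]
  refine sum_le_sum fun w _ => ?_
  linarith [Nat.lt_floor_add_one (X / ∏ i, (w i : ℝ)), div_eq_mul_inv X (∏ i, (w i : ℝ))]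

theorem recipSum_le (hN : 1 ≤ N) (k : ℕ) (hX : 1 ≤ X) :
    recipSum N k X ≤ (log X + k) ^ k / k ! := by
  induction k generalizing X with
  | zero => simpa using recipSum_zero_le
  | succ k ih =>
    -- the shift by `k` is absorbed by summing up to `Y = X e^k` instead of `X`
    set Y := X * exp k with hYdef
    have hXY : X ≤ Y := le_mul_of_one_le_right (by linarith) (one_le_exp (by positivity))
    have hterm : ∀ n ∈ Icc N ⌊X⌋₊,
        (n : ℝ)⁻¹ * recipSum N k (X / n) ≤ log (Y / n) ^ k / n / k ! := by
      intro n hn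
      have hn0 : (0 : ℝ) < n := by exact_mod_cast hN.trans (mem_Icc.1 hn).1
      have hnX : (n : ℝ) ≤ X := (Nat.le_floor_iff (by linarith)).1 (mem_Icc.1 hn).2
      have hlog : log (Y / n) = log (X / n) + k := by
        rw [hYdef, mul_div_right_comm, log_mul (by positivity) (exp_pos _).ne', log_exp]
      calc (n : ℝ)⁻¹ * recipSum N k (X / n) ≤ (n : ℝ)⁻¹ * ((log (X / n) + k) ^ k / k !) := by
            gcongr; exact ih ((one_le_div hn0).2 hnX)
        _ = log (Y / n) ^ k / n / k ! := by rw [hlog]; ring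
    calc recipSum N (k + 1) X = ∑ n ∈ Icc N ⌊X⌋₊, (n : ℝ)⁻¹ * recipSum N k (X / n) :=
          recipSum_succ hN
      _ ≤ ∑ n ∈ Icc N ⌊X⌋₊, log (Y / n) ^ k / n / k ! := sum_le_sum hterm
      _ ≤ ∑ n ∈ Icc 1 ⌊Y⌋₊, log (Y / n) ^ k / n / k ! := by
          refine sum_le_sum_of_subset_of_nonneg (Icc_subset_Icc hN (Nat.floor_mono hXY))
            fun n hn _ => ?_
          have hn0 : (0 : ℝ) < n := by exact_mod_cast (mem_Icc.1 hn).1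
          have hnY : (n : ℝ) ≤ Y := (Nat.le_floor_iff (by linarith)).1 (mem_Icc.1 hn).2
          have := log_nonneg ((one_le_div hn0).2 hnY)
          positivity
      _ = (∑ n ∈ Icc 1 ⌊Y⌋₊, log (Y / n) ^ k / n) / k ! := by rw [sum_div]
      _ ≤ (log Y + 1) ^ (k + 1) / (k + 1) / k ! := by
          gcongr; exact sum_pow_log_div_le k (hX.trans hXY)
      _ = (log X + (k + 1 : ℕ)) ^ (k + 1) / (k + 1) ! := by
          rw [hYdef, log_mul (by positivity) (exp_pos _).ne', log_exp, Nat.factorial_succ,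
            Nat.cast_mul, div_div, Nat.cast_succ, add_assoc]

theorem le_recipSum (hN : 1 ≤ N) (k : ℕ) (hX : (N : ℝ) ^ k ≤ X) :
    log (X / N ^ k) ^ k / k ! ≤ recipSum N k X := by
  induction k generalizing X with
  | zero => simp_all [recipSum_zero hN]
  | succ k ih =>
    set Y := X / N ^ k with hYdef
    have hN1 : (1 : ℝ) ≤ N := by exact_mod_cast hN
    have hNk : 1 ≤ (N : ℝ) ^ k := one_le_pow₀ hN1
    have hNY : (N : ℝ) ≤ Y := by
      rw [hYdef, le_div_iff₀ (by positivity)]; linarith [pow_succ (N : ℝ) k]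
    have hYX : Y ≤ X := div_le_self ((pow_nonneg (by positivity) _).trans hX) hNk
    have hterm : ∀ n ∈ Icc N ⌊Y⌋₊,
        log (Y / n) ^ k / n / k ! ≤ (n : ℝ)⁻¹ * recipSum N k (X / n) := by
      intro n hn
      have hn0 : (0 : ℝ) < n := by exact_mod_cast hN.trans (mem_Icc.1 hn).1
      have hnY : (n : ℝ) ≤ Y := (Nat.le_floor_iff (by linarith)).1 (mem_Icc.1 hn).2
      have hXn : (N : ℝ) ^ k ≤ X / n := by
        rwa [le_div_iff₀ hn0, ← le_div_iff₀' (by positivity)]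
      calc log (Y / n) ^ k / n / k ! = (n : ℝ)⁻¹ * (log (X / n / N ^ k) ^ k / k !) := by
            rw [hYdef, div_right_comm X]; ring
        _ ≤ (n : ℝ)⁻¹ * recipSum N k (X / n) := by gcongr; exact ih hXn
    calc log (X / N ^ (k + 1)) ^ (k + 1) / (k + 1) !
        = log (Y / N) ^ (k + 1) / (k + 1) / k ! := by
          rw [hYdef, div_div X, ← pow_succ, Nat.factorial_succ, Nat.cast_mul, div_div,
            Nat.cast_succ]
      _ ≤ (∑ n ∈ Icc N ⌊Y⌋₊, log (Y / n) ^ k / n) / k ! := by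
          gcongr; exact pow_succ_log_div_le_sum k hN hNY
      _ = ∑ n ∈ Icc N ⌊Y⌋₊, log (Y / n) ^ k / n / k ! := by rw [sum_div]
      _ ≤ ∑ n ∈ Icc N ⌊Y⌋₊, (n : ℝ)⁻¹ * recipSum N k (X / n) := sum_le_sum hterm
      _ ≤ ∑ n ∈ Icc N ⌊X⌋₊, (n : ℝ)⁻¹ * recipSum N k (X / n) :=
          sum_le_sum_of_subset_of_nonneg (Icc_subset_Icc_right (Nat.floor_mono hYX))
            fun _ _ _ => mul_nonneg (by positivity) recipSum_nonneg
      _ = recipSum N (k + 1) X := (recipSum_succ hN).symm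

theorem card_tuples_succ_le_mul_pow (hN : 1 ≤ N) (hX : 1 ≤ X) :
    (#(tuples N (k + 1) X) : ℝ) ≤ X * (log X + k) ^ k / k ! :=
  calc (#(tuples N (k + 1) X) : ℝ) ≤ X * recipSum N k (X / N) := card_tuples_succ_le hN
    _ ≤ X * recipSum N k X := by
        gcongr; exact recipSum_mono hN (div_le_self (by linarith) (by exact_mod_cast hN))
    _ ≤ X * ((log X + k) ^ k / k !) := by gcongr; exact recipSum_le hN k hX
    _ = X * (log X + k) ^ k / k ! := (mul_div_assoc ..).symm

theorem sub_le_card_tuples_succ_of_pow_le (hN : 1 ≤ N) (hX : (N : ℝ) ^ (k + 1) ≤ X) :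
    (X * (log X - (k + 1) * log N) ^ k / k !) - N * #(tuples N k X) ≤
      #(tuples N (k + 1) X) := by
  have hN0 : (0 : ℝ) < N := by exact_mod_cast hN
  have hX0 : 0 < X := (pow_pos hN0 _).trans_le hX
  have hXN : (N : ℝ) ^ k ≤ X / N := by rwa [le_div_iff₀ hN0, ← pow_succ]
  have hlog : log (X / N / N ^ k) = log X - (k + 1) * log N := by
    rw [div_div, ← _root_.pow_succ', log_div hX0.ne' (by positivity), log_pow]
    push_cast; ring
  calc (X * (log X - (k + 1) * log N) ^ k / k !) - N * #(tuples N k X)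
      ≤ X * recipSum N k (X / N) - N * #(tuples N k (X / N)) := by
        gcongr
        · rw [mul_div_assoc, ← hlog]; gcongr; exact le_recipSum hN k hXN
        · exact tuples_mono hN (div_le_self hX0.le (by exact_mod_cast hN))
    _ ≤ #(tuples N (k + 1) X) := sub_le_card_tuples_succ hN

lemma tendsto_card_tuples_div_zero (hN : 1 ≤ N) (k : ℕ) :
    Tendsto (fun R => (#(tuples N k R) : ℝ) / (R * log R ^ k)) atTop (𝓝 0) := by
  have hnonneg : ∀ᶠ R in atTop, 0 ≤ (#(tuples N k R) : ℝ) / (R * log R ^ k) := by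
    filter_upwards [eventually_gt_atTop 1] with R hR
    have := log_pos hR
    positivity
  cases k with
  | zero =>
    refine tendsto_of_tendsto_of_tendsto_of_le_of_le' tendsto_const_nhds tendsto_inv_atTop_zero
      hnonneg ?_
    filter_upwards [eventually_gt_atTop 0] with R hR
    rw [pow_zero, mul_one, ← one_div]
    gcongr
    exact_mod_cast card_tuples_zero_le
  | succ j =>
    have hup : Tendsto (fun R => (log R + j) ^ j / log R ^ j * (log R)⁻¹ / j !) atTop (𝓝 0) := by
      simpa using ((tendsto_log_add_pow_div_log_pow j j).mul
        (tendsto_inv_atTop_zero.comp tendsto_log_atTop)).div_const (j ! : ℝ)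
    refine tendsto_of_tendsto_of_tendsto_of_le_of_le' tendsto_const_nhds hup hnonneg ?_
    filter_upwards [eventually_gt_atTop 1] with R hR
    have := log_pos hR
    calc (#(tuples N (j + 1) R) : ℝ) / (R * log R ^ (j + 1))
        ≤ R * (log R + j) ^ j / j ! / (R * log R ^ (j + 1)) := by
          gcongr; exact card_tuples_succ_le_mul_pow hN hR.le
      _ = (log R + j) ^ j / log R ^ j * (log R)⁻¹ / j ! := by field_simp; ring

theorem tendsto_card_tuples_succ_div (hN : 1 ≤ N) (k : ℕ) :
    Tendsto (fun R => (#(tuples N (k + 1) R) : ℝ) / (R * log R ^ k)) atTop (𝓝 (1 / k !)) := by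
  have hlow : Tendsto (fun R => ((log R + -((k + 1) * log N)) ^ k / log R ^ k / k !) -
      N * ((#(tuples N k R) : ℝ) / (R * log R ^ k))) atTop (𝓝 (1 / k !)) := by
    simpa using ((tendsto_log_add_pow_div_log_pow _ k).div_const (k ! : ℝ)).sub
      ((tendsto_card_tuples_div_zero hN k).const_mul (N : ℝ))
  have hup : Tendsto (fun R => (log R + k) ^ k / log R ^ k / k !) atTop (𝓝 (1 / k !)) := by
    simpa using (tendsto_log_add_pow_div_log_pow k k).div_const (k ! : ℝ)
  refine tendsto_of_tendsto_of_tendsto_of_le_of_le' hlow hup ?_ ?_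
  · filter_upwards [eventually_gt_atTop 1, eventually_ge_atTop ((N : ℝ) ^ (k + 1))]
      with R hR hRN
    have := log_pos hR
    calc ((log R + -((k + 1) * log N)) ^ k / log R ^ k / k !) -
          N * ((#(tuples N k R) : ℝ) / (R * log R ^ k))
        = ((R * (log R - (k + 1) * log N) ^ k / k !) - N * #(tuples N k R)) /
            (R * log R ^ k) := by
          field_simp; ring
      _ ≤ (#(tuples N (k + 1) R) : ℝ) / (R * log R ^ k) := by
          gcongr; exact sub_le_card_tuples_succ_of_pow_le hN hRN
  · filter_upwards [eventually_gt_atTop 1] with R hR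
    have := log_pos hR
    calc (#(tuples N (k + 1) R) : ℝ) / (R * log R ^ k)
        ≤ R * (log R + k) ^ k / k ! / (R * log R ^ k) := by
          gcongr; exact card_tuples_succ_le_mul_pow hN hR.le
      _ = (log R + k) ^ k / log R ^ k / k ! := by field_simp

lemma ncard_eq_card_tuples (hN : 1 ≤ N) :
    {n : Fin k → ℕ | (∀ i, N ≤ n i) ∧ ∏ i, (n i : ℝ) ≤ X}.ncard = #(tuples N k X) := by
  rw [← Set.ncard_coe_finset]
  congr 1
  ext v
  simp [mem_tuples hN]

end BoundedProduct

theorem stmt_3 (N l : ℕ) (hN : 1 ≤ N) (hl : 1 ≤ l) :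
    Filter.Tendsto
      (fun R : ℝ =>
        (({n : Fin l → ℕ | (∀ i, N ≤ n i) ∧ (∏ i, (n i : ℝ)) ≤ R}.ncard) : ℝ)
          / (R * (Real.log R) ^ (l - 1)))
      Filter.atTop (nhds (1 / (Nat.factorial (l - 1) : ℝ))) := by
  obtain ⟨k, rfl⟩ : ∃ k, l = k + 1 := ⟨l - 1, by omega⟩
  simpa only [BoundedProduct.ncard_eq_card_tuples hN, Nat.add_sub_cancel] using
    BoundedProduct.tendsto_card_tuples_succ_div hN k
end

section
/- Let a < b be reals, r ≥ 1, and let g : [a,b] → ℝ have an absolutely continuous (r-1)-st derivative with r-th derivative bounded by M in sup norm. If g has r distinct zeros x_1,...,x_r in [a,b] and x ∈ [a,b] is a maximum point of |g|, then the sup norm of g is at most (M/r!)·∏_{i=1}^r |x - x_i|. -/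
/-- Polynomial interpolation bound for `W^r_∞` functions: if `g` has `r` distinct zeros
in `[a,b]`, its `(r-1)`-st derivative is `M`-Lipschitz on `[a,b]` (equivalently,
`g^{(r-1)}` is absolutely continuous with `‖g^{(r)}‖_∞ ≤ M`), and `|g|` attains its
maximum at `z`, then `‖g‖_∞ = |g z| ≤ (M/r!) ∏ |z - x_i|`. -/
theorem stmt_4 (a b : ℝ) (hab : a < b) (r : ℕ) (hr : 1 ≤ r) (M : ℝ) (hM : 0 ≤ M)
    (g : ℝ → ℝ) (D : ℕ → ℝ → ℝ) (hD0 : D 0 = g)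
    (hderiv : ∀ k, k < r - 1 → ∀ x ∈ Set.Icc a b,
      HasDerivWithinAt (D k) (D (k + 1) x) (Set.Icc a b) x)
    (hlip : LipschitzOnWith (Real.toNNReal M) (D (r - 1)) (Set.Icc a b))
    (x : Fin r → ℝ) (hx : ∀ i, x i ∈ Set.Icc a b) (hinj : Function.Injective x)
    (hzero : ∀ i, g (x i) = 0)
    (z : ℝ) (hz : z ∈ Set.Icc a b) (hmax : ∀ y ∈ Set.Icc a b, |g y| ≤ |g z|) :
    |g z| ≤ M / (Nat.factorial r) * ∏ i, |z - x i| := by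
  classical
  have hprod_nonneg : 0 ≤ M / (Nat.factorial r) * ∏ i, |z - x i| := by positivity
  by_cases hgz : g z = 0
  · rw [hgz, abs_zero]; exact hprod_nonneg
  set q : Polynomial ℝ := ∏ i, (Polynomial.X - Polynomial.C (x i)) with hqdef
  have hqeval : ∀ y, q.eval y = ∏ i, (y - x i) := fun y => by
    simp [hqdef, Polynomial.eval_prod]
  have hzx : ∀ i, z ≠ x i := fun i h => hgz (h ▸ hzero i)
  have hqz : q.eval z ≠ 0 := by
    rw [hqeval]
    exact Finset.prod_ne_zero_iff.2 fun i _ => sub_ne_zero.2 (hzx i)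
  set c : ℝ := g z / q.eval z with hcdef
  have hczq : g z = c * q.eval z := (div_mul_cancel₀ _ hqz).symm
  set hh : ℕ → ℝ → ℝ :=
    fun k y => D k y - c * (Polynomial.derivative^[k] q).eval y with hhdef
  -- degree facts about q
  have hmonic : q.Monic :=
    Polynomial.monic_prod_of_monic _ _ fun i _ => Polynomial.monic_X_sub_C (x i)
  have hdeg : q.natDegree = r := by
    rw [hqdef, Polynomial.natDegree_prod _ _
      (fun i _ => Polynomial.X_sub_C_ne_zero (x i))]
    simp [Polynomial.natDegree_X_sub_C]
  -- continuity of D k on [a,b] for k < r - 1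
  have hcont : ∀ k, k < r - 1 → ContinuousOn (D k) (Set.Icc a b) :=
    fun k hk y hy => ((hderiv k hk y hy).continuousWithinAt)
  -- main inductive claim: hh k has r + 1 - k zeros in [a, b] for k ≤ r - 1
  have claim : ∀ k, k ≤ r - 1 → ∃ u : ℕ → ℝ,
      (∀ i j, i < j → j < r + 1 - k → u i < u j) ∧
      (∀ j, j < r + 1 - k → u j ∈ Set.Icc a b ∧ hh k (u j) = 0) := by
    intro k
    induction k with
    | zero =>
      intro _
      -- zeros: the x i together with z, sorted
      have hznot : z ∉ Finset.image x Finset.univ := by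
        simp only [Finset.mem_image, Finset.mem_univ, true_and, not_exists]
        exact fun i h => hzx i h.symm
      have hcard : (insert z (Finset.image x Finset.univ)).card = r + 1 := by
        rw [Finset.card_insert_of_notMem hznot,
          Finset.card_image_of_injective _ hinj]
        simp
      set e := (insert z (Finset.image x Finset.univ)).orderIsoOfFin hcard with he
      refine ⟨fun j => if hj : j < r + 1 then (e ⟨j, hj⟩ : ℝ) else 0, ?_, ?_⟩
      · intro i j hij hj
        rw [Nat.sub_zero] at hj
        have hi : i < r + 1 := lt_trans hij hj
        simp only [dif_pos hi, dif_pos hj]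
        exact_mod_cast e.strictMono (show (⟨i, hi⟩ : Fin (r + 1)) < ⟨j, hj⟩ from hij)
      · intro j hj
        rw [Nat.sub_zero] at hj
        simp only [dif_pos hj]
        have hmem : ((e ⟨j, hj⟩ : ℝ)) ∈ insert z (Finset.image x Finset.univ) :=
          (e ⟨j, hj⟩).2
        rcases Finset.mem_insert.1 hmem with h | h
        · refine ⟨by rw [h]; exact hz, ?_⟩
          simp only [hhdef, Function.iterate_zero_apply, h, hD0]
          rw [hczq]; ring
        · rw [Finset.mem_image] at h
          obtain ⟨i, -, hi⟩ := h
          refine ⟨by rw [← hi]; exact hx i, ?_⟩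
          simp only [hhdef, Function.iterate_zero_apply, ← hi, hD0, hzero i, hqeval]
          rw [Finset.prod_eq_zero (Finset.mem_univ i) (sub_self (x i))]
          ring
    | succ k ih =>
      intro hk1
      have hklt : k < r - 1 := hk1
      obtain ⟨u, humono, huz⟩ := ih (le_of_lt hklt)
      have hnum : r + 1 - k = (r - k) + 1 := by omega
      -- for each j < r - k, apply Rolle on [u j, u (j+1)]
      have key : ∀ j, ∃ t, j < r - k →
          t ∈ Set.Ioo (u j) (u (j + 1)) ∧ hh (k + 1) t = 0 := by
        intro j
        by_cases hj : j < r - k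
        · have hj1 : j + 1 < r + 1 - k := by omega
          have hlt : u j < u (j + 1) := humono j (j + 1) (Nat.lt_succ_self j) hj1
          have hjm : u j ∈ Set.Icc a b := (huz j (by omega)).1
          have hj1m : u (j + 1) ∈ Set.Icc a b := (huz (j + 1) hj1).1
          have hsub : Set.Icc (u j) (u (j + 1)) ⊆ Set.Icc a b :=
            Set.Icc_subset_Icc hjm.1 hj1m.2
          have hcontk : ContinuousOn (hh k) (Set.Icc (u j) (u (j + 1))) := by
            apply ContinuousOn.mono _ hsub
            exact ((hcont k hklt).sub
              ((Polynomial.continuous_aeval (R := ℝ) (Polynomial.derivative^[k] q)).continuousOn.const_smul c))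
          have hderivk : ∀ y ∈ Set.Ioo (u j) (u (j + 1)),
              HasDerivAt (hh k) (hh (k + 1) y) y := by
            intro y hy
            have hya : a < y := lt_of_le_of_lt hjm.1 hy.1
            have hyb : y < b := lt_of_lt_of_le hy.2 hj1m.2
            have hD : HasDerivAt (D k) (D (k + 1) y) y :=
              (hderiv k hklt y ⟨le_of_lt hya, le_of_lt hyb⟩).hasDerivAt
                (Icc_mem_nhds hya hyb)
            have hp : HasDerivAt (fun w => (Polynomial.derivative^[k] q).eval w)
                ((Polynomial.derivative^[k + 1] q).eval y) y := by
              rw [Function.iterate_succ_apply']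
              exact (Polynomial.derivative^[k] q).hasDerivAt y
            exact hD.sub (hp.const_mul c)
          obtain ⟨t, htmem, ht⟩ := exists_hasDerivAt_eq_zero hlt hcontk
            (by rw [(huz j (by omega)).2, (huz (j + 1) hj1).2]) hderivk
          exact ⟨t, fun _ => ⟨htmem, ht⟩⟩
        · exact ⟨0, fun h => absurd h hj⟩
      choose v hv using key
      refine ⟨v, ?_, ?_⟩
      · intro i j hij hj
        have hj' : j < r - k := by omega
        have hi' : i < r - k := by omega
        have h1 : v i < u (i + 1) := ((hv i hi').1).2
        have h2 : u j < v j := ((hv j hj').1).1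
        have h3 : u (i + 1) ≤ u j := by
          have hcase : i + 1 = j ∨ i + 1 < j := by omega
          rcases hcase with h | h
          · exact le_of_eq (by rw [h])
          · exact le_of_lt (humono (i + 1) j h (by omega))
        linarith
      · intro j hj
        have hj' : j < r - k := by omega
        obtain ⟨htmem, ht⟩ := hv j hj'
        have hjm : u j ∈ Set.Icc a b := (huz j (by omega)).1
        have hj1m : u (j + 1) ∈ Set.Icc a b := (huz (j + 1) (by omega)).1
        exact ⟨⟨le_trans hjm.1 (le_of_lt htmem.1), le_trans (le_of_lt htmem.2) hj1m.2⟩, ht⟩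
  -- extract the two zeros of hh (r-1)
  obtain ⟨u, humono, huz⟩ := claim (r - 1) le_rfl
  have h2 : r + 1 - (r - 1) = 2 := by omega
  have h0lt : u 0 < u 1 := humono 0 1 Nat.zero_lt_one (by omega)
  obtain ⟨hu0m, hu0z⟩ := huz 0 (by omega)
  obtain ⟨hu1m, hu1z⟩ := huz 1 (by omega)
  -- the polynomial derivative^[r-1] q is linear with leading coefficient r!
  set p : Polynomial ℝ := Polynomial.derivative^[r - 1] q with hp
  have hpdeg : p.natDegree ≤ 1 := by
    calc p.natDegree ≤ q.natDegree - (r - 1) := Polynomial.natDegree_iterate_derivative q (r - 1)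
    _ ≤ 1 := by rw [hdeg]; omega
  have hcoeff1 : p.coeff 1 = (Nat.factorial r : ℝ) := by
    rw [hp, Polynomial.coeff_iterate_derivative]
    have h1r : 1 + (r - 1) = r := by omega
    rw [h1r]
    have : q.coeff r = 1 := by
      have := hmonic.coeff_natDegree
      rwa [hdeg] at this
    rw [this]
    have hdesc : r.descFactorial (r - 1) = Nat.factorial r := by
      rw [Nat.descFactorial_eq_div (Nat.sub_le r 1)]
      have : r - (r - 1) = 1 := by omega
      rw [this, Nat.factorial_one, Nat.div_one]
    rw [hdesc]
    simp
  have heval : ∀ y, p.eval y = p.coeff 1 * y + p.coeff 0 := by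
    intro y
    conv_lhs => rw [Polynomial.eq_X_add_C_of_natDegree_le_one hpdeg]
    simp
  -- bound |c| using the Lipschitz assumption
  have hDdiff : D (r - 1) (u 0) - D (r - 1) (u 1) = c * (Nat.factorial r : ℝ) * (u 0 - u 1) := by
    have e0 : D (r - 1) (u 0) = c * p.eval (u 0) := by
      have := hu0z; simp only [hhdef] at this; linarith [this]
    have e1 : D (r - 1) (u 1) = c * p.eval (u 1) := by
      have := hu1z; simp only [hhdef] at this; linarith [this]
    rw [e0, e1, heval, heval, hcoeff1]; ring
  have hdist := hlip.dist_le_mul (u 0) hu0m (u 1) hu1m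
  rw [Real.dist_eq, Real.dist_eq, hDdiff, Real.coe_toNNReal M hM] at hdist
  have habs : |c * (Nat.factorial r : ℝ) * (u 0 - u 1)| =
      |c| * (Nat.factorial r : ℝ) * (u 1 - u 0) := by
    rw [abs_mul, abs_mul, abs_of_nonneg (by positivity : (0:ℝ) ≤ (Nat.factorial r : ℝ)),
      abs_sub_comm, abs_of_pos (by linarith : (0:ℝ) < u 1 - u 0)]
  rw [habs, abs_sub_comm, abs_of_pos (by linarith : (0:ℝ) < u 1 - u 0)] at hdist
  have hcle : |c| * (Nat.factorial r : ℝ) ≤ M := by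
    have h01 : (0:ℝ) < u 1 - u 0 := by linarith
    exact le_of_mul_le_mul_right (by linarith) h01
  have hcbound : |c| ≤ M / (Nat.factorial r : ℝ) := by
    rw [le_div_iff₀ (by positivity : (0:ℝ) < (Nat.factorial r : ℝ))]
    exact hcle
  -- conclude
  calc |g z| = |c| * |q.eval z| := by rw [hczq, abs_mul]
  _ ≤ M / (Nat.factorial r) * |q.eval z| := by
      apply mul_le_mul_of_nonneg_right hcbound (abs_nonneg _)
  _ = M / (Nat.factorial r) * ∏ i, |z - x i| := by
      rw [hqeval, Finset.abs_prod]
end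

section
/- Let g ∈ W^r_∞([0,1]) with ‖g^(r)‖_∞ ≤ M, and suppose g has r distinct zeros in the interval [1/2−δ, 1/2+δ] for some δ ∈ (0,1/2]. Then ‖g‖_∞ ≤ M(1+2δ)^r/(2^r · r!). -/
/-!
The classical interpolation-error argument. Let `p = ∏ (X - x i)`. For a point `y` that is not
a node, `g - c p` with `c = g y / p y` vanishes at the `r` nodes and at `y`, so by `r - 1`
applications of Rolle's theorem its `(r-1)`-st derivative `g^(r-1) - c r! t - const` has two
distinct zeros. The Lipschitz bound on `g^(r-1)` then forces `|c| r! ≤ M`, whence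
`|g y| = |c| |p y| ≤ M / r! * (1/2 + δ)^r`.
-/

open Set Polynomial
open scoped NNReal Nat

section Rolle

variable {s : Set ℝ}

theorem exists_strictMono_deriv_zeros (hs : s.OrdConnected) {f f' : ℝ → ℝ}
    (hf : ∀ x ∈ s, HasDerivWithinAt f (f' x) s x) {k : ℕ} {z : Fin (k + 1) → ℝ}
    (hz : StrictMono z) (hzs : ∀ i, z i ∈ s) (hf0 : ∀ i, f (z i) = 0) :
    ∃ w : Fin k → ℝ, StrictMono w ∧ (∀ i, w i ∈ s) ∧ ∀ i, f' (w i) = 0 := by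
  have hroot : ∀ i : Fin k, ∃ c ∈ Ioo (z i.castSucc) (z i.succ), f' c = 0 := by
    intro i
    have hsub : Icc (z i.castSucc) (z i.succ) ⊆ s := hs.out (hzs _) (hzs _)
    refine exists_hasDerivAt_eq_zero (hz Fin.castSucc_lt_succ)
      (fun x hx => (hf x (hsub hx)).continuousWithinAt.mono hsub) (by rw [hf0, hf0])
      fun x hx => (hf x (hsub (Ioo_subset_Icc_self hx))).hasDerivAt ?_
    exact Filter.mem_of_superset (Ioo_mem_nhds hx.1 hx.2) (Ioo_subset_Icc_self.trans hsub)
  choose w hw hw0 using hroot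
  refine ⟨w, fun i j hij => ?_, fun i => hs.out (hzs _) (hzs _) (Ioo_subset_Icc_self (hw i)), hw0⟩
  calc w i < z i.succ := (hw i).2
    _ ≤ z j.castSucc := hz.monotone (Fin.succ_le_castSucc_iff.2 hij)
    _ < w j := (hw j).1

theorem exists_strictMono_iterate_zeros (hs : s.OrdConnected) {m n : ℕ} {F : ℕ → ℝ → ℝ}
    (hF : ∀ k < n, ∀ x ∈ s, HasDerivWithinAt (F k) (F (k + 1) x) s x) {z : Fin (m + n) → ℝ}
    (hz : StrictMono z) (hzs : ∀ i, z i ∈ s) (hF0 : ∀ i, F 0 (z i) = 0) :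
    ∃ w : Fin m → ℝ, StrictMono w ∧ (∀ i, w i ∈ s) ∧ ∀ i, F n (w i) = 0 := by
  induction n generalizing F with
  | zero => exact ⟨z, hz, hzs, hF0⟩
  | succ n ih =>
    obtain ⟨w, hw, hws, hw0⟩ := exists_strictMono_deriv_zeros hs (hF 0 n.succ_pos) hz hzs hF0
    exact ih (F := fun k => F (k + 1)) (fun k hk => hF (k + 1) (by omega)) hw hws hw0

theorem exists_lt_iterate_zeros_of_finset (hs : s.OrdConnected) {n : ℕ} {F : ℕ → ℝ → ℝ}
    (hF : ∀ k < n, ∀ x ∈ s, HasDerivWithinAt (F k) (F (k + 1) x) s x) {t : Finset ℝ}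
    (ht : t.card = 2 + n) (hts : ↑t ⊆ s) (hF0 : ∀ x ∈ t, F 0 x = 0) :
    ∃ u ∈ s, ∃ v ∈ s, u < v ∧ F n u = 0 ∧ F n v = 0 := by
  obtain ⟨w, hw, hws, hw0⟩ := exists_strictMono_iterate_zeros hs hF
    (t.orderEmbOfFin ht).strictMono (fun i => hts (t.orderEmbOfFin_mem ht i))
    (fun i => hF0 _ (t.orderEmbOfFin_mem ht i))
  exact ⟨w 0, hws 0, w 1, hws 1, hw Fin.zero_lt_one, hw0 0, hw0 1⟩

end Rolle

theorem LipschitzOnWith.abs_le_of_sub_eq_mul {s : Set ℝ} {f : ℝ → ℝ} {K : ℝ≥0}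
    (hf : LipschitzOnWith K f s) {u v a : ℝ} (hu : u ∈ s) (hv : v ∈ s) (huv : u ≠ v)
    (h : f v - f u = a * (v - u)) : |a| ≤ K := by
  have hdist := hf.dist_le_mul v hv u hu
  rw [Real.dist_eq, Real.dist_eq, h, abs_mul] at hdist
  exact le_of_mul_le_mul_right hdist (abs_pos.2 (sub_ne_zero.2 huv.symm))

theorem Polynomial.eval_iterate_derivative_sub_of_monic {R : Type*} [CommRing R] {p : R[X]}
    {n : ℕ} (hp : p.Monic) (hdeg : p.natDegree = n + 1) (a b : R) :
    (derivative^[n] p).eval b - (derivative^[n] p).eval a = (n + 1)! * (b - a) := by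
  have hq : (derivative^[n] p).natDegree ≤ 1 := (natDegree_iterate_derivative p n).trans (by omega)
  have hfac : (n + 1).descFactorial n = (n + 1)! := by
    simpa using Nat.factorial_mul_descFactorial (n.le_succ)
  have hcoeff : (derivative^[n] p).coeff 1 = (n + 1)! := by
    rw [coeff_iterate_derivative, add_comm 1 n, ← hdeg, hp.coeff_natDegree, hdeg, hfac,
      nsmul_one]
  rw [eq_X_add_C_of_natDegree_le_one hq, hcoeff]
  simp only [eval_add, eval_mul, eval_C, eval_X]
  ring

theorem abs_mul_factorial_le_of_eq_mul_eval {s : Set ℝ} (hs : s.OrdConnected) {n : ℕ}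
    {D : ℕ → ℝ → ℝ} {K : ℝ≥0} (hD : ∀ k < n, ∀ x ∈ s, HasDerivWithinAt (D k) (D (k + 1) x) s x)
    (hlip : LipschitzOnWith K (D n) s) {p : ℝ[X]} (hp : p.Monic) (hdeg : p.natDegree = n + 1)
    (c : ℝ) {t : Finset ℝ} (ht : t.card = 2 + n) (hts : ↑t ⊆ s)
    (htD : ∀ z ∈ t, D 0 z = c * p.eval z) :
    |c| * (n + 1)! ≤ K := by
  set F : ℕ → ℝ → ℝ := fun k z => D k z - c * (derivative^[k] p).eval z
  have hF : ∀ k < n, ∀ z ∈ s, HasDerivWithinAt (F k) (F (k + 1) z) s z := by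
    intro k hk z hz
    have hpoly := (derivative^[k] p).hasDerivAt z
    rw [← Function.iterate_succ_apply' derivative] at hpoly
    exact (hD k hk z hz).sub (hpoly.hasDerivWithinAt.const_mul c)
  have hF0 : ∀ z ∈ t, F 0 z = 0 := fun z hz => by simp [F, htD z hz]
  obtain ⟨u, hu, v, hv, huv, hFu, hFv⟩ := exists_lt_iterate_zeros_of_finset hs hF ht hts hF0
  have hc : |c * (n + 1)!| ≤ K := by
    refine hlip.abs_le_of_sub_eq_mul hu hv huv.ne ?_
    simp only [F, sub_eq_zero] at hFu hFv
    rw [hFu, hFv, ← mul_sub, eval_iterate_derivative_sub_of_monic hp hdeg u v, mul_assoc]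
  rwa [abs_mul, Nat.abs_cast] at hc

theorem abs_le_div_factorial_mul_prod {s : Set ℝ} (hs : s.OrdConnected) {n : ℕ}
    {D : ℕ → ℝ → ℝ} {K : ℝ≥0} (hD : ∀ k < n, ∀ x ∈ s, HasDerivWithinAt (D k) (D (k + 1) x) s x)
    (hlip : LipschitzOnWith K (D n) s) {x : Fin (n + 1) → ℝ} (hinj : Function.Injective x)
    (hxs : ∀ i, x i ∈ s) (hx0 : ∀ i, D 0 (x i) = 0) {y : ℝ} (hy : y ∈ s) :
    |D 0 y| ≤ K / (n + 1)! * ∏ i, |y - x i| := by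
  by_cases hyx : ∃ i, y = x i
  · obtain ⟨i, rfl⟩ := hyx
    rw [hx0, abs_zero]
    positivity
  push Not at hyx
  set p : ℝ[X] := ∏ i, (X - C (x i))
  have hp : p.Monic := monic_prod_of_monic _ _ fun i _ => monic_X_sub_C (x i)
  have hdeg : p.natDegree = n + 1 := by
    simp [p, natDegree_prod_of_monic _ _ fun i _ => monic_X_sub_C (x i)]
  have hp_eval : ∀ z, p.eval z = ∏ i, (z - x i) := fun z => by simp [p, eval_prod]
  have hpy : p.eval y ≠ 0 := by
    rw [hp_eval]
    exact Finset.prod_ne_zero_iff.2 fun i _ => sub_ne_zero.2 (hyx i)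
  set c := D 0 y / p.eval y
  set t : Finset ℝ := insert y (Finset.univ.image x)
  have ht : t.card = 2 + n := by
    rw [Finset.card_insert_of_notMem (by simpa [eq_comm] using hyx),
      Finset.card_image_of_injective _ hinj, Finset.card_univ, Fintype.card_fin]
    ring
  have hts : ↑t ⊆ s := by
    simpa [t, insert_subset_iff, range_subset_iff] using ⟨hy, hxs⟩
  have htD : ∀ z ∈ t, D 0 z = c * p.eval z := by
    simp only [t, Finset.mem_insert, Finset.mem_image, Finset.mem_univ, true_and]
    rintro z (rfl | ⟨i, rfl⟩)
    · rw [div_mul_cancel₀ _ hpy]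
    · simp [hx0, hp_eval, Finset.prod_eq_zero (Finset.mem_univ i)]
  have hc := abs_mul_factorial_le_of_eq_mul_eval hs hD hlip hp hdeg c ht hts htD
  rw [← le_div_iff₀ (by positivity)] at hc
  calc |D 0 y| = |c| * |p.eval y| := by rw [← abs_mul, div_mul_cancel₀ _ hpy]
    _ ≤ K / (n + 1)! * ∏ i, |y - x i| := by
      rw [hp_eval, Finset.abs_prod]
      gcongr

theorem stmt_7_general (r : ℕ) (hr : 1 ≤ r) (M : ℝ) (hM : 0 ≤ M) (δ : ℝ)
    (hδ1 : δ ≤ 1 / 2)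
    (g : ℝ → ℝ) (D : ℕ → ℝ → ℝ) (hD0 : D 0 = g)
    (hderiv : ∀ k, k < r - 1 → ∀ x ∈ Set.Icc (0 : ℝ) 1,
      HasDerivWithinAt (D k) (D (k + 1) x) (Set.Icc (0 : ℝ) 1) x)
    (hlip : LipschitzOnWith (Real.toNNReal M) (D (r - 1)) (Set.Icc (0 : ℝ) 1))
    (x : Fin r → ℝ) (hx : ∀ i, x i ∈ Set.Icc (1 / 2 - δ) (1 / 2 + δ))
    (hinj : Function.Injective x) (hzero : ∀ i, g (x i) = 0) :
    ∀ y ∈ Set.Icc (0 : ℝ) 1, |g y| ≤ M * (1 + 2 * δ) ^ r / (2 ^ r * Nat.factorial r) := by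
  intro y hy
  obtain ⟨n, rfl⟩ : ∃ n, r = n + 1 := ⟨r - 1, by omega⟩
  subst hD0
  rw [Nat.add_sub_cancel] at hderiv hlip
  have hxs : ∀ i, x i ∈ Icc (0 : ℝ) 1 := fun i => ⟨by linarith [(hx i).1], by linarith [(hx i).2]⟩
  have hdist : ∀ i, |y - x i| ≤ 1 / 2 + δ := fun i =>
    abs_le.2 ⟨by linarith [(hx i).2, hy.1], by linarith [(hx i).1, hy.2]⟩
  calc |D 0 y| ≤ M / (n + 1)! * ∏ i, |y - x i| := by
        simpa [Real.coe_toNNReal _ hM] using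
          abs_le_div_factorial_mul_prod ordConnected_Icc hderiv hlip hinj hxs hzero hy
    _ ≤ M / (n + 1)! * ∏ _i : Fin (n + 1), (1 / 2 + δ) := by gcongr with i; exact hdist i
    _ = M * (1 + 2 * δ) ^ (n + 1) / (2 ^ (n + 1) * (n + 1)!) := by
      rw [Finset.prod_const, Finset.card_univ, Fintype.card_fin,
        show 1 / 2 + δ = (1 + 2 * δ) / 2 by ring, div_pow]
      field_simp

/-- If `g ∈ W^r_∞([0,1])` with `‖g^{(r)}‖_∞ ≤ M` (encoded by: `g` has pointwise
derivatives `D 1, ..., D (r-1)` on `[0,1]` and `D (r-1)` is `M`-Lipschitz there)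
and `g` has `r` distinct zeros in `[1/2-δ, 1/2+δ]` for some `δ ∈ (0,1/2]`, then
`‖g‖_∞ ≤ M (1+2δ)^r / (2^r r!)`. -/
theorem stmt_7 (r : ℕ) (hr : 1 ≤ r) (M : ℝ) (hM : 0 ≤ M) (δ : ℝ) (hδ0 : 0 < δ)
    (hδ1 : δ ≤ 1 / 2)
    (g : ℝ → ℝ) (D : ℕ → ℝ → ℝ) (hD0 : D 0 = g)
    (hderiv : ∀ k, k < r - 1 → ∀ x ∈ Set.Icc (0 : ℝ) 1,
      HasDerivWithinAt (D k) (D (k + 1) x) (Set.Icc (0 : ℝ) 1) x)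
    (hlip : LipschitzOnWith (Real.toNNReal M) (D (r - 1)) (Set.Icc (0 : ℝ) 1))
    (x : Fin r → ℝ) (hx : ∀ i, x i ∈ Set.Icc (1 / 2 - δ) (1 / 2 + δ))
    (hinj : Function.Injective x) (hzero : ∀ i, g (x i) = 0) :
    ∀ y ∈ Set.Icc (0 : ℝ) 1, |g y| ≤ M * (1 + 2 * δ) ^ r / (2 ^ r * Nat.factorial r) :=
  stmt_7_general r hr M hM δ hδ1 g D hD0 hderiv hlip x hx hinj hzero
end

section
/- Let P ⊂ [0,1]^d be a finite set of cardinality n ≥ 1. Then there exists a point z ∈ [0,1]^d such that ‖z − x‖_2 ≥ √d/(5 n^(1/d)) for all x ∈ P. -/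
/-! The ball of radius `r` around `x` has volume at most `exp (b r²) (π / b)^(d/2)` for every
`b > 0`, because its indicator is dominated by `exp (b (r² - ‖z - x‖²))`, a Gaussian.
With `r = √d s` and `b = 1 / (2 s²)` this is `(√(2πe) s)^d`. For `s = 1 / (5 n^{1/d})` the `n`
balls around the points of `P` thus have total volume at most `(√(2πe) / 5)^d < 1`, the volume
of the unit cube, so some point of the cube lies outside all of them. -/

open MeasureTheory Metric Module Real
open scoped ENNReal

section Gaussian

variable {V : Type*} [NormedAddCommGroup V] [InnerProductSpace ℝ V] [FiniteDimensional ℝ V]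
  [MeasurableSpace V] [BorelSpace V]

theorem integrable_rexp_neg_mul_sq_norm {b : ℝ} (hb : 0 < b) :
    Integrable fun v : V => rexp (-b * ‖v‖ ^ 2) := by
  simpa [Complex.norm_exp, ← Complex.ofReal_pow] using
    (GaussianFourier.integrable_cexp_neg_mul_sq_norm_add (V := V)
      (show 0 < (b : ℂ).re from hb) 0 0).norm

theorem lintegral_ofReal_rexp_neg_mul_sq_norm {b : ℝ} (hb : 0 < b) :
    ∫⁻ v : V, ENNReal.ofReal (rexp (-b * ‖v‖ ^ 2))
      = ENNReal.ofReal ((π / b) ^ (finrank ℝ V / 2 : ℝ)) := by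
  rw [← GaussianFourier.integral_rexp_neg_mul_sq_norm hb,
    ofReal_integral_eq_lintegral_ofReal (integrable_rexp_neg_mul_sq_norm hb)
      (Filter.Eventually.of_forall fun _ => (exp_pos _).le)]

theorem volume_ball_le_exp_mul_rpow (x : V) (r : ℝ) {b : ℝ} (hb : 0 < b) :
    volume (ball x r) ≤ ENNReal.ofReal (rexp (b * r ^ 2) * (π / b) ^ (finrank ℝ V / 2 : ℝ)) := by
  have hdom : (ball x r).indicator 1 ≤ fun z : V =>
      ENNReal.ofReal (rexp (b * r ^ 2)) * ENNReal.ofReal (rexp (-b * ‖z - x‖ ^ 2)) := by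
    intro z
    dsimp only
    by_cases hz : z ∈ ball x r
    · have hzr : ‖z - x‖ ^ 2 ≤ r ^ 2 := by
        rw [mem_ball, dist_eq_norm] at hz
        exact pow_le_pow_left₀ (norm_nonneg _) hz.le 2
      rw [Set.indicator_of_mem hz, Pi.one_apply, ← ENNReal.ofReal_mul (exp_pos _).le,
        ← exp_add, ENNReal.one_le_ofReal]
      exact one_le_exp (by nlinarith)
    · rw [Set.indicator_of_notMem hz]
      exact zero_le
  calc volume (ball x r) = ∫⁻ z, (ball x r).indicator 1 z :=
        (lintegral_indicator_one measurableSet_ball).symm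
    _ ≤ ∫⁻ z, ENNReal.ofReal (rexp (b * r ^ 2)) * ENNReal.ofReal (rexp (-b * ‖z - x‖ ^ 2)) :=
        lintegral_mono hdom
    _ = ENNReal.ofReal (rexp (b * r ^ 2)) * ENNReal.ofReal ((π / b) ^ (finrank ℝ V / 2 : ℝ)) := by
        rw [lintegral_const_mul' _ _ ENNReal.ofReal_ne_top,
          lintegral_sub_right_eq_self (fun z => ENNReal.ofReal (rexp (-b * ‖z‖ ^ 2))),
          lintegral_ofReal_rexp_neg_mul_sq_norm hb]
    _ = _ := (ENNReal.ofReal_mul (exp_pos _).le).symm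

theorem volume_ball_sqrt_finrank_mul_le (x : V) {s : ℝ} (hs : 0 < s) :
    volume (ball x (√(finrank ℝ V) * s))
      ≤ ENNReal.ofReal ((√(2 * π * rexp 1) * s) ^ finrank ℝ V) := by
  set d := finrank ℝ V
  convert volume_ball_le_exp_mul_rpow x (√d * s) (b := 1 / (2 * s ^ 2)) (by positivity) using 2
  have hexp : rexp (1 / (2 * s ^ 2) * (√d * s) ^ 2) = rexp 1 ^ (d / 2 : ℝ) := by
    rw [exp_one_rpow, mul_pow, sq_sqrt d.cast_nonneg]
    congr 1
    field_simp
  rw [hexp, ← mul_rpow (exp_pos 1).le (by positivity), rpow_div_two_eq_sqrt _ (by positivity),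
    rpow_natCast]
  congr 1
  rw [show π / (1 / (2 * s ^ 2)) = 2 * π * s ^ 2 by field_simp,
    show rexp 1 * (2 * π * s ^ 2) = 2 * π * rexp 1 * s ^ 2 by ring,
    sqrt_mul' _ (sq_nonneg s), sqrt_sq hs.le]

end Gaussian

theorem volume_euclideanSpace_unitCube (ι : Type*) [Fintype ι] :
    volume {z : EuclideanSpace ℝ ι | ∀ i, z i ∈ Set.Icc (0 : ℝ) 1} = 1 := by
  have hpre : {z : EuclideanSpace ℝ ι | ∀ i, z i ∈ Set.Icc (0 : ℝ) 1}
      = WithLp.ofLp ⁻¹' Set.univ.pi fun _ => Set.Icc 0 1 := by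
    ext z
    simp only [Set.mem_ofPred_eq, Set.mem_preimage, Set.mem_univ_pi]
  rw [hpre, (PiLp.volume_preserving_ofLp ι).measure_preimage
    (MeasurableSet.univ_pi fun _ => measurableSet_Icc).nullMeasurableSet, volume_pi_pi]
  simp

theorem MeasureTheory.exists_mem_forall_notMem_of_sum_measure_lt {α ι : Type*}
    [MeasurableSpace α] {μ : Measure α} {S : Set α} {I : Finset ι} {B : ι → Set α}
    (h : ∑ i ∈ I, μ (B i) < μ S) : ∃ z ∈ S, ∀ i ∈ I, z ∉ B i := by
  by_contra! hcover
  have hS : S ⊆ ⋃ i ∈ I, B i := fun z hz => by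
    obtain ⟨i, hi, hzi⟩ := hcover z hz
    exact Set.mem_biUnion hi hzi
  exact (measure_mono hS |>.trans (measure_biUnion_finset_le I B)).not_gt h

theorem sqrt_two_mul_pi_mul_exp_one_lt_five : √(2 * π * rexp 1) < 5 := by
  rw [sqrt_lt' (by norm_num)]
  nlinarith [pi_lt_d2, exp_one_lt_d9, pi_pos, exp_pos 1]

theorem natCast_mul_div_mul_rpow_one_div_pow {n d : ℕ} (hn : n ≠ 0) (hd : d ≠ 0) (c a : ℝ) :
    n * (c / (a * (n : ℝ) ^ ((1 : ℝ) / d))) ^ d = (c / a) ^ d := by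
  rw [div_pow, mul_pow, one_div, rpow_inv_natCast_pow n.cast_nonneg hd, div_pow]
  field_simp

theorem stmt_9_general (d n : ℕ) (hd : 1 ≤ d) (hn : 1 ≤ n)
    (P : Finset (EuclideanSpace ℝ (Fin d))) (hP : P.card = n) :
    ∃ z : EuclideanSpace ℝ (Fin d), (∀ i, z i ∈ Set.Icc (0 : ℝ) 1) ∧
      ∀ x ∈ P, Real.sqrt d / (5 * (n : ℝ) ^ ((1 : ℝ) / d)) ≤ dist z x := by
  set s : ℝ := 1 / (5 * (n : ℝ) ^ ((1 : ℝ) / d))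
  have hs : 0 < s := by positivity
  set c := √(2 * π * rexp 1)
  have hsum : ∑ x ∈ P, volume (ball x (√d * s))
      < volume {z : EuclideanSpace ℝ (Fin d) | ∀ i, z i ∈ Set.Icc (0 : ℝ) 1} := by
    calc ∑ x ∈ P, volume (ball x (√d * s)) ≤ ∑ _x ∈ P, ENNReal.ofReal ((c * s) ^ d) :=
          Finset.sum_le_sum fun x _ => by
            simpa using volume_ball_sqrt_finrank_mul_le x hs
      _ = ENNReal.ofReal ((c / 5) ^ d) := by
          rw [Finset.sum_const, hP, nsmul_eq_mul, ← ENNReal.ofReal_natCast,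
            ← ENNReal.ofReal_mul n.cast_nonneg, mul_one_div,
            natCast_mul_div_mul_rpow_one_div_pow (by omega) (by omega)]
      _ < 1 := by
          rw [ENNReal.ofReal_lt_one]
          exact pow_lt_one₀ (by positivity)
            ((div_lt_one (by norm_num)).2 sqrt_two_mul_pi_mul_exp_one_lt_five) (by omega)
      _ = _ := (volume_euclideanSpace_unitCube (Fin d)).symm
  obtain ⟨z, hz, hfar⟩ := exists_mem_forall_notMem_of_sum_measure_lt hsum
  refine ⟨z, hz, fun x hx => ?_⟩
  have hzx := hfar x hx
  rw [mem_ball, not_lt] at hzx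
  rwa [← mul_one_div]

/-- For any `n` points in `[0,1]^d` there is a point `z ∈ [0,1]^d` whose Euclidean
distance to all of them is at least `√d / (5 n^{1/d})`. -/
theorem stmt_9 (d n : ℕ) (hd : 1 ≤ d) (hn : 1 ≤ n)
    (P : Finset (EuclideanSpace ℝ (Fin d))) (hP : P.card = n)
    (hPcube : ∀ x ∈ P, ∀ i, x i ∈ Set.Icc (0 : ℝ) 1) :
    ∃ z : EuclideanSpace ℝ (Fin d), (∀ i, z i ∈ Set.Icc (0 : ℝ) 1) ∧
      ∀ x ∈ P, Real.sqrt d / (5 * (n : ℝ) ^ ((1 : ℝ) / d)) ≤ dist z x :=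
  stmt_9_general d n hd hn P hP
end

section
/- For d ≥ 1 and k ≥ 0, the sparse grid P(k,d) = ⋃_{|j|=k} M_{j_1} × ⋯ × M_{j_d}, where M_j = {(2i−1)/2^(j+1) : 1 ≤ i ≤ 2^j} and |j| = j_1 + ⋯ + j_d, has cardinality 2^k · C(d+k−1, d−1). -/
/-- The sparse grid of order `k` in dimension `d`:
`P(k,d) = ⋃_{|j|=k} M_{j_1} × ⋯ × M_{j_d}` with
`M_j = {(2i-1)/2^{j+1} : 1 ≤ i ≤ 2^j}`. -/
def sparseGrid (d k : ℕ) : Set (Fin d → ℝ) :=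
  {x | ∃ j : Fin d → ℕ, (∑ i, j i) = k ∧
    ∀ i, ∃ m : ℕ, 1 ≤ m ∧ m ≤ 2 ^ (j i) ∧ x i = (2 * (m : ℝ) - 1) / 2 ^ (j i + 1)}

lemma dyadic_nat_inj {p q a b : ℕ} (ha : 1 ≤ a) (hb : 1 ≤ b)
    (h : (2 * a - 1) * 2 ^ (q + 1) = (2 * b - 1) * 2 ^ (p + 1)) : p = q ∧ a = b := by
  have hoa : ¬ (2 ∣ (2 * a - 1)) := by omega
  have hob : ¬ (2 ∣ (2 * b - 1)) := by omega
  have hA : 2 * a - 1 ≠ 0 := by omega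
  have hB : 2 * b - 1 ≠ 0 := by omega
  have hP : (2 : ℕ) ^ (p + 1) ≠ 0 := by positivity
  have hQ : (2 : ℕ) ^ (q + 1) ≠ 0 := by positivity
  have hpq : p = q := by
    have h2 : ((2 * a - 1) * 2 ^ (q + 1)).factorization 2
        = ((2 * b - 1) * 2 ^ (p + 1)).factorization 2 := by rw [h]
    rw [Nat.factorization_mul hA hQ, Nat.factorization_mul hB hP] at h2
    simp [Nat.factorization_eq_zero_of_not_dvd hoa, Nat.factorization_eq_zero_of_not_dvd hob,
      Nat.Prime.factorization_pow, Nat.prime_two] at h2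
    omega
  subst hpq
  have := Nat.eq_of_mul_eq_mul_right (show 0 < 2 ^ (p + 1) by positivity) h
  omega

lemma dyadic_real_inj {p q a b : ℕ} (ha : 1 ≤ a) (hb : 1 ≤ b)
    (h : (2 * (a : ℝ) - 1) / 2 ^ (p + 1) = (2 * (b : ℝ) - 1) / 2 ^ (q + 1)) :
    p = q ∧ a = b := by
  apply dyadic_nat_inj ha hb
  have h' : (2 * (a : ℝ) - 1) * 2 ^ (q + 1) = (2 * (b : ℝ) - 1) * 2 ^ (p + 1) := by
    field_simp at h
    linarith
  have : (((2 * a - 1) * 2 ^ (q + 1) : ℕ) : ℝ) = (((2 * b - 1) * 2 ^ (p + 1) : ℕ) : ℝ) := by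
    push_cast [Nat.cast_sub (by omega : 1 ≤ 2 * a), Nat.cast_sub (by omega : 1 ≤ 2 * b)]
    exact h'
  exact_mod_cast this

lemma card_antidiagonalTuple (d k : ℕ) :
    (Finset.Nat.antidiagonalTuple d k).card = Nat.multichoose d k := by
  have e : {j : Fin d → ℕ // j ∈ Finset.Nat.antidiagonalTuple d k} ≃ Sym (Fin d) k :=
    (Equiv.subtypeEquivRight fun j => Finset.Nat.mem_antidiagonalTuple).trans
      (Sym.equivNatSumOfFintype (Fin d) k).symm
  have := Fintype.card_congr e
  rw [Fintype.card_coe] at this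
  rw [this, Sym.card_sym_eq_multichoose, Fintype.card_fin]

/-- The sparse grid `P(k,d)` has cardinality `2^k · C(d+k-1, d-1)`. -/
theorem stmt_10 (d k : ℕ) (hd : 1 ≤ d) :
    (sparseGrid d k).ncard = 2 ^ k * Nat.choose (d + k - 1) (d - 1) := by
  classical
  set F : (Fin d → ℕ) × (Fin d → ℕ) → (Fin d → ℝ) :=
    fun p i => (2 * (p.2 i : ℝ) - 1) / 2 ^ (p.1 i + 1) with hF
  set S : Finset ((Fin d → ℕ) × (Fin d → ℕ)) :=
    (Finset.Nat.antidiagonalTuple d k).biUnion fun j =>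
      (Fintype.piFinset fun i => Finset.Icc 1 (2 ^ j i)).image fun m => (j, m) with hS
  have memS : ∀ p : (Fin d → ℕ) × (Fin d → ℕ), p ∈ S ↔
      (∑ i, p.1 i) = k ∧ ∀ i, 1 ≤ p.2 i ∧ p.2 i ≤ 2 ^ p.1 i := by
    rintro ⟨j, m⟩
    simp only [hS, Finset.mem_biUnion, Finset.mem_image, Fintype.mem_piFinset,
      Finset.mem_Icc, Finset.Nat.mem_antidiagonalTuple, Prod.mk.injEq]
    constructor
    · rintro ⟨j', hj', m', hm', rfl, rfl⟩
      exact ⟨hj', hm'⟩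
    · rintro ⟨hj, hm⟩
      exact ⟨j, hj, m, hm, rfl, rfl⟩
  have hgrid : sparseGrid d k = ↑(S.image F) := by
    ext x
    simp only [Finset.coe_image, Set.mem_image, Finset.mem_coe, sparseGrid, Set.mem_setOf_eq]
    constructor
    · rintro ⟨j, hj, hx⟩
      choose m hm1 hm2 hm3 using hx
      refine ⟨(j, m), (memS _).2 ⟨hj, fun i => ⟨hm1 i, hm2 i⟩⟩, ?_⟩
      funext i
      exact (hm3 i).symm
    · rintro ⟨⟨j, m⟩, hp, rfl⟩
      obtain ⟨hj, hm⟩ := (memS _).1 hp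
      exact ⟨j, hj, fun i => ⟨m i, (hm i).1, (hm i).2, rfl⟩⟩
  have hinj : Set.InjOn F ↑S := by
    rintro ⟨j₁, m₁⟩ h₁ ⟨j₂, m₂⟩ h₂ hfe
    obtain ⟨-, hm₁⟩ := (memS _).1 h₁
    obtain ⟨-, hm₂⟩ := (memS _).1 h₂
    have key : ∀ i, j₁ i = j₂ i ∧ m₁ i = m₂ i := by
      intro i
      have := congrFun hfe i
      simp only [hF] at this
      exact dyadic_real_inj (hm₁ i).1 (hm₂ i).1 this
    have : j₁ = j₂ := funext fun i => (key i).1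
    have : m₁ = m₂ := funext fun i => (key i).2
    simp_all
  have hScard : S.card = (Finset.Nat.antidiagonalTuple d k).card * 2 ^ k := by
    rw [hS, Finset.card_biUnion]
    · rw [Finset.sum_congr rfl (fun j hj => ?_), Finset.sum_const, smul_eq_mul]
      rw [Finset.card_image_of_injective _ (fun a b h => (Prod.mk.injEq _ _ _ _ ▸ h).2)]
      rw [Fintype.card_piFinset]
      simp only [Nat.card_Icc, Nat.add_sub_cancel]
      rw [Finset.prod_pow_eq_pow_sum, Finset.Nat.mem_antidiagonalTuple.1 hj]
    · intro a ha b hb hab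
      simp only [Finset.disjoint_left, Finset.mem_image, Fintype.mem_piFinset,
        Prod.mk.injEq]
      rintro ⟨j, m⟩ ⟨m₁, -, h₁⟩ ⟨m₂, -, h₂⟩
      exact hab (congrArg Prod.fst (h₁.trans h₂.symm))
  have hcnt : (Finset.Nat.antidiagonalTuple d k).card = Nat.choose (d + k - 1) (d - 1) := by
    rw [card_antidiagonalTuple, Nat.multichoose_eq]
    have h1 : d - 1 = (d + k - 1) - k := by omega
    rw [h1, Nat.choose_symm (by omega)]
  rw [hgrid, Set.ncard_coe_finset, Finset.card_image_of_injOn hinj, hScard, hcnt, mul_comm]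
end

section
/- Let f : ℝ^d → ℝ be supported in an axis-parallel cube of edge length l > 0, B ∈ ℝ^(d×d) invertible, v ∈ ℝ^d and a ≥ 1. Then the number of m ∈ ℤ^d with (aB)^(−⊤)(m+v) ∈ supp f is at most (l‖B‖_1 + 1)^d a^d. -/
open Matrix

/-- If `f : ℝ^d → ℝ` is supported in an axis-parallel cube of edge length `l > 0`,
`B` is invertible, `v ∈ ℝ^d` and `a ≥ 1`, then the number of `m ∈ ℤ^d` with
`(aB)^{-⊤}(m+v) ∈ supp f` is at most `(l‖B‖₁ + 1)^d a^d`, where `‖B‖₁` is the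
maximal column sum of absolute values of `B`. -/
theorem stmt_13 (d : ℕ) (hd : 1 ≤ d) (f : (Fin d → ℝ) → ℝ) (l : ℝ) (hl : 0 < l)
    (z : Fin d → ℝ) (hsupp : ∀ x ∈ tsupport f, ∀ i, |x i - z i| ≤ l / 2)
    (B : Matrix (Fin d) (Fin d) ℝ) (hB : IsUnit B)
    (v : Fin d → ℝ) (a : ℝ) (ha : 1 ≤ a) :
    ((Set.ncard {m : Fin d → ℤ | ((a • B)⁻¹)ᵀ.mulVec ((fun i => (m i : ℝ)) + v) ∈ tsupport f}) : ℝ)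
      ≤ (l * (⨆ j : Fin d, ∑ i, |B i j|) + 1) ^ d * a ^ d := by
  have ha0 : (0:ℝ) < a := lt_of_lt_of_le one_pos ha
  set K : ℝ := ⨆ j : Fin d, ∑ i, |B i j| with hKdef
  have hne : Nonempty (Fin d) := ⟨⟨0, hd⟩⟩
  have hKcol : ∀ i, ∑ j, |B j i| ≤ K := fun i =>
    le_ciSup (f := fun j : Fin d => ∑ i, |B i j|) (Set.Finite.bddAbove (Set.finite_range _)) i
  have hK0 : 0 ≤ K := by
    obtain ⟨j⟩ := hne
    exact le_trans (Finset.sum_nonneg fun _ _ => abs_nonneg _) (hKcol j)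
  have hdet : IsUnit (a • B).det := by
    rw [det_smul]
    simp only [Fintype.card_fin]
    exact (IsUnit.pow d (isUnit_iff_ne_zero.mpr (ne_of_gt ha0))).mul
      ((isUnit_iff_isUnit_det B).mp hB)
  set r : ℝ := a * (K * (l / 2)) with hrdef
  have hr0 : 0 ≤ r := by positivity
  set c : Fin d → ℝ := fun i => a * ∑ j, B j i * z j - v i with hcdef
  -- main pointwise bound
  have key : ∀ m ∈ {m : Fin d → ℤ |
      ((a • B)⁻¹)ᵀ.mulVec ((fun i => (m i : ℝ)) + v) ∈ tsupport f},
      ∀ i, ⌈c i - r⌉ ≤ m i ∧ m i ≤ ⌊c i + r⌋ := by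
    intro m hm i
    set x : Fin d → ℝ := ((a • B)⁻¹)ᵀ.mulVec ((fun i => (m i : ℝ)) + v) with hxdef
    have hx : ∀ j, |x j - z j| ≤ l / 2 := hsupp x hm
    have heq : (a • B)ᵀ.mulVec x = (fun i => (m i : ℝ)) + v := by
      rw [hxdef, mulVec_mulVec, ← transpose_mul, nonsing_inv_mul _ hdet,
        transpose_one, one_mulVec]
    have heval : (m i : ℝ) + v i = ∑ j, a * B j i * x j := by
      have := congrFun heq i
      simp only [Pi.add_apply] at this
      rw [← this]
      simp [mulVec, dotProduct, transpose_apply, Matrix.smul_apply, smul_eq_mul]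
    have hdist : |(m i : ℝ) - c i| ≤ r := by
      have h1 : (m i : ℝ) - c i = ∑ j, a * B j i * (x j - z j) := by
        calc (m i : ℝ) - c i
            = (∑ j, a * B j i * x j) - a * ∑ j, B j i * z j := by
              simp only [hcdef]; linarith [heval]
          _ = ∑ j, a * B j i * (x j - z j) := by
              rw [Finset.mul_sum, ← Finset.sum_sub_distrib]
              exact Finset.sum_congr rfl fun j _ => by ring
      rw [h1]
      calc |∑ j, a * B j i * (x j - z j)| ≤ ∑ j, |a * B j i * (x j - z j)| :=
            Finset.abs_sum_le_sum_abs _ _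
        _ ≤ ∑ j, a * |B j i| * (l / 2) := by
            apply Finset.sum_le_sum
            intro j _
            rw [abs_mul, abs_mul, abs_of_pos ha0]
            have : |x j - z j| ≤ l / 2 := hx j
            have hb : 0 ≤ a * |B j i| := by positivity
            calc a * |B j i| * |x j - z j| ≤ a * |B j i| * (l / 2) := by
                  exact mul_le_mul_of_nonneg_left this hb
              _ = a * |B j i| * (l / 2) := rfl
        _ = a * ((∑ j, |B j i|) * (l / 2)) := by rw [← Finset.sum_mul, ← Finset.mul_sum]; ring
        _ ≤ r := by
            rw [hrdef]
            apply mul_le_mul_of_nonneg_left _ (le_of_lt ha0)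
            exact mul_le_mul_of_nonneg_right (hKcol i) (by positivity)
    obtain ⟨h1, h2⟩ := abs_le.mp hdist
    constructor
    · exact Int.ceil_le.mpr (by linarith)
    · exact Int.le_floor.mpr (by linarith)
  -- subset of a finite box
  have hsub : {m : Fin d → ℤ |
      ((a • B)⁻¹)ᵀ.mulVec ((fun i => (m i : ℝ)) + v) ∈ tsupport f} ⊆
      ↑(Fintype.piFinset fun i => Finset.Icc ⌈c i - r⌉ ⌊c i + r⌋) := by
    intro m hm
    simp only [Finset.mem_coe, Fintype.mem_piFinset, Finset.mem_Icc]
    exact fun i => key m hm i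
  have hcard : Set.ncard {m : Fin d → ℤ |
      ((a • B)⁻¹)ᵀ.mulVec ((fun i => (m i : ℝ)) + v) ∈ tsupport f} ≤
      (Fintype.piFinset fun i => Finset.Icc ⌈c i - r⌉ ⌊c i + r⌋).card := by
    rw [← Set.ncard_coe_finset]
    exact Set.ncard_le_ncard hsub (Finset.finite_toSet _)
  have hpicard : ((Fintype.piFinset fun i => Finset.Icc ⌈c i - r⌉ ⌊c i + r⌋).card : ℝ)
      = ∏ i, ((Finset.Icc ⌈c i - r⌉ ⌊c i + r⌋).card : ℝ) := by
    rw [Fintype.card_piFinset]; push_cast; ring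
  have hbox : ∀ i, ((Finset.Icc ⌈c i - r⌉ ⌊c i + r⌋).card : ℝ) ≤ 2 * r + 1 := by
    intro i
    rw [Int.card_Icc]
    have hfl : (⌊c i + r⌋ : ℝ) ≤ c i + r := Int.floor_le _
    have hcl : c i - r ≤ (⌈c i - r⌉ : ℝ) := Int.le_ceil _
    rcases le_or_gt (⌊c i + r⌋ + 1 - ⌈c i - r⌉) 0 with h | h
    · rw [Int.toNat_of_nonpos h]
      push_cast; linarith
    · rw [show ((⌊c i + r⌋ + 1 - ⌈c i - r⌉).toNat : ℝ)
          = ((⌊c i + r⌋ + 1 - ⌈c i - r⌉ : ℤ) : ℝ) by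
          exact_mod_cast congrArg (Int.cast : ℤ → ℝ) (Int.toNat_of_nonneg h.le)]
      push_cast
      linarith
  calc ((Set.ncard {m : Fin d → ℤ |
        ((a • B)⁻¹)ᵀ.mulVec ((fun i => (m i : ℝ)) + v) ∈ tsupport f}) : ℝ)
      ≤ ((Fintype.piFinset fun i => Finset.Icc ⌈c i - r⌉ ⌊c i + r⌋).card : ℝ) := by
        exact_mod_cast hcard
    _ = ∏ i, ((Finset.Icc ⌈c i - r⌉ ⌊c i + r⌋).card : ℝ) := hpicard
    _ ≤ ∏ _i : Fin d, (2 * r + 1) := by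
        apply Finset.prod_le_prod (fun i _ => by positivity) (fun i _ => hbox i)
    _ = (2 * r + 1) ^ d := by rw [Finset.prod_const, Finset.card_univ, Fintype.card_fin]
    _ ≤ ((l * K + 1) * a) ^ d := by
        apply pow_le_pow_left₀ (by positivity)
        rw [hrdef]
        have : 2 * (a * (K * (l / 2))) = a * (l * K) := by ring
        rw [this]
        nlinarith [mul_nonneg (le_of_lt hl) hK0]
    _ = (l * K + 1) ^ d * a ^ d := by rw [mul_pow]
end

section
/- Let B ∈ ℝ^(d×d) be a random matrix which is almost surely invertible, and let v be uniformly distributed on [0,1]^d and independent of B. For any f ∈ L^1(ℝ^d), the series Q_B^v(f) = |det B|^(−1) ∑_{m∈ℤ^d} f(B^(−⊤)(m+v)) converges absolutely almost surely and its expectation equals ∫_{ℝ^d} f(y) dy. -/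
/-!
For a fixed invertible matrix `M`, the integer translates of the unit cube tile `ℝ^d`, so
integrating the lattice sum `∑ₘ f (M (m + x))` over `x` in the cube unfolds it to
`∫ f (M u) du = |det M|⁻¹ ∫ f`: the rule is unbiased for every deterministic `M = B^{-⊤}`.
For the random matrix, independence makes the law of `(B^{-⊤}, v)` a product measure. Tonelli,
applied to `|det M| ∑ₘ |f (M (m + x))|`, shows that this majorant has integral `∫ |f|`; hence the
lattice sum converges absolutely almost surely, the rule is integrable, and Fubini reduces its
expectation to the deterministic case.
-/

open Matrix MeasureTheory ProbabilityTheory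

/-- Matrices carry the product measurable structure (entrywise). -/
instance matrixMeasurableSpace (d : ℕ) : MeasurableSpace (Matrix (Fin d) (Fin d) ℝ) :=
  MeasurableSpace.pi

section ChangeOfVariables

variable {ι : Type*} [Fintype ι] [DecidableEq ι] {M : Matrix ι ι ℝ}

theorem measurableEmbedding_mulVec (hM : M.det ≠ 0) : MeasurableEmbedding (M *ᵥ ·) :=
  (LinearMap.isClosedEmbedding_of_injective (f := M.mulVecLin)
    (LinearMap.ker_eq_bot.2 (mulVec_injective_of_det_ne_zero hM))).measurableEmbedding

theorem map_mulVec_volume (hM : M.det ≠ 0) :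
    volume.map (M *ᵥ ·) = ‖M.det‖ₑ⁻¹ • volume := by
  have := Real.map_matrix_volume_pi_eq_smul_volume_pi hM
  rwa [toLin'_apply', ← Real.enorm_eq_ofReal_abs, enorm_inv hM] at this

theorem quasiMeasurePreserving_mulVec_add (hM : M.det ≠ 0) (c : ι → ℝ) :
    Measure.QuasiMeasurePreserving (fun x => M *ᵥ (c + x)) volume volume :=
  Measure.QuasiMeasurePreserving.comp
    ⟨(measurableEmbedding_mulVec hM).measurable,
      (map_mulVec_volume hM).symm ▸ Measure.smul_absolutelyContinuous⟩
    (measurePreserving_add_left volume c).quasiMeasurePreserving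

theorem lintegral_comp_mulVec (hM : M.det ≠ 0) (h : (ι → ℝ) → ENNReal) :
    ∫⁻ x, h (M *ᵥ x) = ‖M.det‖ₑ⁻¹ * ∫⁻ y, h y := by
  rw [← (measurableEmbedding_mulVec hM).lintegral_map, map_mulVec_volume hM,
    lintegral_smul_measure, smul_eq_mul]

theorem integrable_comp_mulVec (hM : M.det ≠ 0) {f : (ι → ℝ) → ℝ} (hf : Integrable f) :
    Integrable fun x => f (M *ᵥ x) := by
  have := hf.smul_measure (ENNReal.inv_ne_top.2 (enorm_ne_zero.2 hM))
  rw [← map_mulVec_volume hM] at this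
  exact (measurableEmbedding_mulVec hM).integrable_map_iff.1 this

theorem integral_comp_mulVec (hM : M.det ≠ 0) (f : (ι → ℝ) → ℝ) :
    ∫ x, f (M *ᵥ x) = |M.det|⁻¹ * ∫ y, f y := by
  rw [← (measurableEmbedding_mulVec hM).integral_map, map_mulVec_volume hM,
    integral_smul_measure, smul_eq_mul, ENNReal.toReal_inv, toReal_enorm, Real.norm_eq_abs]

end ChangeOfVariables

section Periodization

variable {ι : Type*} [Fintype ι]

def unitCube (ι : Type*) : Set (ι → ℝ) := Set.univ.pi fun _ => Set.Ico 0 1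

noncomputable def intVecEquiv :
    (ι → ℤ) ≃ (Submodule.span ℤ (Set.range (Pi.basisFun ℝ ι))).toAddSubgroup :=
  ((Pi.basisFun ℝ ι).restrictScalars ℤ).equivFun.symm.toEquiv

theorem coe_intVecEquiv (m : ι → ℤ) : (intVecEquiv m : ι → ℝ) = fun i => (m i : ℝ) := by
  classical
  ext j
  simp [intVecEquiv, Module.Basis.equivFun_symm_apply, Finset.sum_apply, Pi.single_apply]

instance : Countable (Submodule.span ℤ (Set.range (Pi.basisFun ℝ ι))).toAddSubgroup :=
  intVecEquiv.symm.injective.countable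

theorem isAddFundamentalDomain_unitCube :
    IsAddFundamentalDomain (Submodule.span ℤ (Set.range (Pi.basisFun ℝ ι))).toAddSubgroup
      (unitCube ι) volume := by
  rw [unitCube, ← ZSpan.fundamentalDomain_pi_basisFun]
  exact ZSpan.isAddFundamentalDomain' _ volume

theorem tsum_lintegral_unitCube (h : (ι → ℝ) → ENNReal) :
    ∑' m : ι → ℤ, ∫⁻ x in unitCube ι, h ((fun i => (m i : ℝ)) + x) = ∫⁻ y, h y := by
  rw [isAddFundamentalDomain_unitCube.lintegral_eq_tsum'' h, ← intVecEquiv.tsum_eq]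
  simp only [AddSubgroup.vadd_def, vadd_eq_add, coe_intVecEquiv]

theorem tsum_integral_unitCube {h : (ι → ℝ) → ℝ} (hh : Integrable h) :
    ∑' m : ι → ℤ, ∫ x in unitCube ι, h ((fun i => (m i : ℝ)) + x) = ∫ y, h y := by
  rw [isAddFundamentalDomain_unitCube.integral_eq_tsum'' h hh, ← intVecEquiv.tsum_eq]
  simp only [AddSubgroup.vadd_def, vadd_eq_add, coe_intVecEquiv]

theorem volume_restrict_pi_Icc :
    volume.restrict (Set.univ.pi fun _ : ι => Set.Icc (0 : ℝ) 1) = volume.restrict (unitCube ι) :=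
  Measure.restrict_congr_set Measure.pi_Ico_ae_eq_pi_Icc.symm

end Periodization

section LatticeRule

variable {ι : Type*} [Fintype ι] [DecidableEq ι] {M : Matrix ι ι ℝ} {f : (ι → ℝ) → ℝ}

/-- The lattice rule `Q_B^v(f)` of the statement is `latticeRule f (B⁻¹)ᵀ v`. -/
noncomputable def latticeRule (f : (ι → ℝ) → ℝ) (M : Matrix ι ι ℝ) (x : ι → ℝ) : ℝ :=
  |M.det| * ∑' m : ι → ℤ, f (M *ᵥ ((fun i => (m i : ℝ)) + x))

theorem enorm_latticeRule_le (f : (ι → ℝ) → ℝ) (M : Matrix ι ι ℝ) (x : ι → ℝ) :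
    ‖latticeRule f M x‖ₑ ≤ ‖M.det‖ₑ * ∑' m : ι → ℤ, ‖f (M *ᵥ ((fun i => (m i : ℝ)) + x))‖ₑ := by
  rw [latticeRule, enorm_mul, Real.enorm_abs]
  gcongr
  exact enorm_tsum_le_tsum_enorm

theorem setLIntegral_unitCube_tsum_mulVec (hM : M.det ≠ 0) {h : (ι → ℝ) → ENNReal}
    (hh : AEMeasurable h) :
    ∫⁻ x in unitCube ι, ∑' m : ι → ℤ, h (M *ᵥ ((fun i => (m i : ℝ)) + x))
      = ‖M.det‖ₑ⁻¹ * ∫⁻ y, h y := by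
  have hmeas (m : ι → ℤ) : AEMeasurable (fun x => h (M *ᵥ ((fun i => (m i : ℝ)) + x)))
      (volume.restrict (unitCube ι)) :=
    (hh.comp_quasiMeasurePreserving (quasiMeasurePreserving_mulVec_add hM _)).restrict
  rw [lintegral_tsum hmeas, tsum_lintegral_unitCube (fun u => h (M *ᵥ u)),
    lintegral_comp_mulVec hM]

theorem setIntegral_unitCube_latticeRule (hM : M.det ≠ 0) (hf : Integrable f) :
    ∫ x in unitCube ι, latticeRule f M x = ∫ y, f y := by
  have hfM := integrable_comp_mulVec hM hf
  have hsum :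
      ∑' m : ι → ℤ, ∫⁻ x in unitCube ι, ‖f (M *ᵥ ((fun i => (m i : ℝ)) + x))‖ₑ ≠ ⊤ := by
    rw [tsum_lintegral_unitCube fun u => ‖f (M *ᵥ u)‖ₑ]
    exact hfM.2.ne
  have hmeas (m : ι → ℤ) : AEStronglyMeasurable (fun x => f (M *ᵥ ((fun i => (m i : ℝ)) + x)))
      (volume.restrict (unitCube ι)) :=
    (hf.1.comp_quasiMeasurePreserving (quasiMeasurePreserving_mulVec_add hM _)).restrict
  simp only [latticeRule]
  rw [integral_const_mul, integral_tsum hmeas hsum,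
    tsum_integral_unitCube hfM, integral_comp_mulVec hM, ← mul_assoc,
    mul_inv_cancel₀ (abs_ne_zero.2 hM), one_mul]

end LatticeRule

section RandomMatrix

variable {d : ℕ} {μ : Measure (Matrix (Fin d) (Fin d) ℝ)} {f : (Fin d → ℝ) → ℝ}

instance : BorelSpace (Matrix (Fin d) (Fin d) ℝ) :=
  inferInstanceAs (BorelSpace (Fin d → Fin d → ℝ))

theorem measurable_det : Measurable fun M : Matrix (Fin d) (Fin d) ℝ => M.det :=
  continuous_id.matrix_det.measurable

theorem measurable_inv_transpose : Measurable fun M : Matrix (Fin d) (Fin d) ℝ => (M⁻¹)ᵀ := by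
  have : Measurable fun M : Matrix (Fin d) (Fin d) ℝ => M.det⁻¹ • M.adjugate :=
    (measurable_inv.comp measurable_det).smul continuous_id.matrix_adjugate.measurable
  simp_rw [inv_def, Ring.inverse_eq_inv']
  exact continuous_id.matrix_transpose.measurable.comp this

theorem det_inv_transpose (M : Matrix (Fin d) (Fin d) ℝ) : ((M⁻¹)ᵀ).det = M.det⁻¹ := by
  rw [det_transpose, det_nonsing_inv, Ring.inverse_eq_inv']

theorem quasiMeasurePreserving_prod_mulVec_add (hμ : ∀ᵐ M ∂μ, M.det ≠ 0)
    {ν : Measure (Fin d → ℝ)} [SFinite ν] (hν : ν ≪ volume) (c : Fin d → ℝ) :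
    Measure.QuasiMeasurePreserving (fun p : Matrix (Fin d) (Fin d) ℝ × (Fin d → ℝ) =>
      p.1 *ᵥ (c + p.2)) (μ.prod ν) volume := by
  have hmeas : Measurable fun p : Matrix (Fin d) (Fin d) ℝ × (Fin d → ℝ) => p.1 *ᵥ (c + p.2) :=
    (continuous_fst.matrix_mulVec (continuous_const.add continuous_snd)).measurable
  refine ⟨hmeas, Measure.AbsolutelyContinuous.mk fun s hs hs0 => ?_⟩
  rw [Measure.map_apply hmeas hs, Measure.prod_apply (hmeas hs)]
  refine (lintegral_congr_ae ?_).trans lintegral_zero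
  filter_upwards [hμ] with M hM
  exact hν ((quasiMeasurePreserving_mulVec_add hM c).preimage_null hs0)

theorem aestronglyMeasurable_latticeRule (hμ : ∀ᵐ M ∂μ, M.det ≠ 0) {ν : Measure (Fin d → ℝ)}
    [SFinite ν] (hν : ν ≪ volume) (hf : AEStronglyMeasurable f) :
    AEStronglyMeasurable (fun p : Matrix (Fin d) (Fin d) ℝ × (Fin d → ℝ) =>
      latticeRule f p.1 p.2) (μ.prod ν) :=
  (measurable_det.comp measurable_fst).abs.aestronglyMeasurable.mul <|
    AEStronglyMeasurable.tsum fun _ =>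
      hf.comp_quasiMeasurePreserving (quasiMeasurePreserving_prod_mulVec_add hμ hν _)

theorem aemeasurable_enorm_det_mul_tsum_enorm (hμ : ∀ᵐ M ∂μ, M.det ≠ 0)
    {ν : Measure (Fin d → ℝ)} [SFinite ν] (hν : ν ≪ volume) (hf : AEStronglyMeasurable f) :
    AEMeasurable (fun p : Matrix (Fin d) (Fin d) ℝ × (Fin d → ℝ) =>
      ‖p.1.det‖ₑ * ∑' m : Fin d → ℤ, ‖f (p.1 *ᵥ ((fun i => (m i : ℝ)) + p.2))‖ₑ) (μ.prod ν) :=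
  (measurable_det.comp measurable_fst).enorm.aemeasurable.mul <| AEMeasurable.tsum fun _ =>
    hf.enorm.comp_quasiMeasurePreserving (quasiMeasurePreserving_prod_mulVec_add hμ hν _)

theorem lintegral_prod_unitCube_tsum_enorm (hμ : ∀ᵐ M ∂μ, M.det ≠ 0) [IsFiniteMeasure μ]
    (hf : AEStronglyMeasurable f) :
    ∫⁻ p, ‖p.1.det‖ₑ * ∑' m : Fin d → ℤ, ‖f (p.1 *ᵥ ((fun i => (m i : ℝ)) + p.2))‖ₑ
        ∂(μ.prod (volume.restrict (unitCube (Fin d))))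
      = μ Set.univ * ∫⁻ y, ‖f y‖ₑ := by
  rw [lintegral_prod _ (aemeasurable_enorm_det_mul_tsum_enorm hμ
      Measure.absolutelyContinuous_restrict hf), mul_comm, ← lintegral_const]
  refine lintegral_congr_ae ?_
  filter_upwards [hμ] with M hM
  rw [lintegral_const_mul' _ _ enorm_ne_top, setLIntegral_unitCube_tsum_mulVec hM hf.enorm,
    ← mul_assoc, ENNReal.mul_inv_cancel (enorm_ne_zero.2 hM) enorm_ne_top, one_mul]

theorem ae_summable_abs_prod_unitCube (hμ : ∀ᵐ M ∂μ, M.det ≠ 0) [IsFiniteMeasure μ]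
    (hf : Integrable f) :
    ∀ᵐ p ∂(μ.prod (volume.restrict (unitCube (Fin d)))),
      Summable fun m : Fin d → ℤ => |f (p.1 *ᵥ ((fun i => (m i : ℝ)) + p.2))| := by
  have hfin := ae_lt_top' (aemeasurable_enorm_det_mul_tsum_enorm hμ
      Measure.absolutelyContinuous_restrict hf.1)
    ((lintegral_prod_unitCube_tsum_enorm hμ hf.1).trans_ne
      (ENNReal.mul_ne_top (measure_ne_top _ _) hf.2.ne))
  filter_upwards [hfin, Measure.quasiMeasurePreserving_fst.ae hμ] with p hp hdet
  simp only [← Real.norm_eq_abs, ← tsum_enorm_ne_top_iff_summable_norm]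
  exact fun htop => hp.ne (ENNReal.mul_eq_top.2 (Or.inl ⟨enorm_ne_zero.2 hdet, htop⟩))

theorem integrable_latticeRule_prod_unitCube (hμ : ∀ᵐ M ∂μ, M.det ≠ 0) [IsFiniteMeasure μ]
    (hf : Integrable f) :
    Integrable (fun p : Matrix (Fin d) (Fin d) ℝ × (Fin d → ℝ) => latticeRule f p.1 p.2)
      (μ.prod (volume.restrict (unitCube (Fin d)))) := by
  refine ⟨aestronglyMeasurable_latticeRule hμ Measure.absolutelyContinuous_restrict hf.1, ?_⟩
  rw [hasFiniteIntegral_iff_enorm]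
  calc ∫⁻ p, ‖latticeRule f p.1 p.2‖ₑ ∂(μ.prod (volume.restrict (unitCube (Fin d))))
      ≤ ∫⁻ p, ‖p.1.det‖ₑ * ∑' m : Fin d → ℤ, ‖f (p.1 *ᵥ ((fun i => (m i : ℝ)) + p.2))‖ₑ
          ∂(μ.prod (volume.restrict (unitCube (Fin d)))) :=
        lintegral_mono fun p => enorm_latticeRule_le f p.1 p.2
    _ = μ Set.univ * ∫⁻ y, ‖f y‖ₑ := lintegral_prod_unitCube_tsum_enorm hμ hf.1
    _ < ⊤ := ENNReal.mul_lt_top (measure_lt_top _ _) hf.2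

theorem integral_latticeRule_prod_unitCube (hμ : ∀ᵐ M ∂μ, M.det ≠ 0) [IsProbabilityMeasure μ]
    (hf : Integrable f) :
    ∫ p, latticeRule f p.1 p.2 ∂(μ.prod (volume.restrict (unitCube (Fin d)))) = ∫ y, f y := by
  rw [integral_prod _ (integrable_latticeRule_prod_unitCube hμ hf),
    integral_congr_ae (hμ.mono fun M hM => setIntegral_unitCube_latticeRule hM hf),
    integral_const, probReal_univ, one_smul]

end RandomMatrix

theorem stmt_14_general {Ω : Type*} [MeasurableSpace Ω] (P : Measure Ω) [IsProbabilityMeasure P]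
    (d : ℕ)
    (B : Ω → Matrix (Fin d) (Fin d) ℝ) (v : Ω → (Fin d → ℝ))
    (hBmeas : Measurable B) (hvmeas : Measurable v)
    (hBinv : ∀ᵐ ω ∂P, IsUnit (B ω))
    (hvlaw : Measure.map v P = volume.restrict (Set.univ.pi fun _ : Fin d => Set.Icc (0:ℝ) 1))
    (hindep : IndepFun B v P)
    (f : (Fin d → ℝ) → ℝ) (hf : Integrable f) :
    (∀ᵐ ω ∂P, Summable fun m : Fin d → ℤ =>
        |f (((B ω)⁻¹)ᵀ.mulVec ((fun i => (m i : ℝ)) + v ω))|) ∧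
    (∫ ω, |(B ω).det|⁻¹ *
        ∑' m : Fin d → ℤ, f (((B ω)⁻¹)ᵀ.mulVec ((fun i => (m i : ℝ)) + v ω)) ∂P)
      = ∫ y, f y := by
  set A := fun ω => ((B ω)⁻¹)ᵀ
  have hA : Measurable A := measurable_inv_transpose.comp hBmeas
  have hAv : Measurable fun ω => (A ω, v ω) := hA.prodMk hvmeas
  have hlaw :
      P.map (fun ω => (A ω, v ω)) = (P.map A).prod (volume.restrict (unitCube (Fin d))) := by
    rw [← volume_restrict_pi_Icc, ← hvlaw]
    exact (indepFun_iff_map_prod_eq_prod_map_map hA.aemeasurable hvmeas.aemeasurable).1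
      (hindep.comp measurable_inv_transpose measurable_id)
  have hdet : ∀ᵐ M ∂P.map A, M.det ≠ 0 := by
    refine (ae_map_iff hA.aemeasurable (measurable_det (measurableSet_singleton 0).compl)).2 ?_
    filter_upwards [hBinv] with ω hω
    rw [det_inv_transpose]
    exact inv_ne_zero ((isUnit_iff_isUnit_det _).1 hω).ne_zero
  have : IsProbabilityMeasure (P.map A) := Measure.isProbabilityMeasure_map hA.aemeasurable
  have hQ (ω : Ω) : |(B ω).det|⁻¹ * ∑' m : Fin d → ℤ,
      f (((B ω)⁻¹)ᵀ.mulVec ((fun i => (m i : ℝ)) + v ω)) = latticeRule f (A ω) (v ω) := by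
    rw [latticeRule, det_inv_transpose, abs_inv]
  refine ⟨ae_of_ae_map hAv.aemeasurable (hlaw ▸ ae_summable_abs_prod_unitCube hdet hf), ?_⟩
  have hQmeas : AEStronglyMeasurable (fun p => latticeRule f p.1 p.2)
      (P.map fun ω => (A ω, v ω)) :=
    hlaw ▸ aestronglyMeasurable_latticeRule hdet Measure.absolutelyContinuous_restrict hf.1
  simp_rw [hQ]
  rw [← integral_map hAv.aemeasurable hQmeas, hlaw, integral_latticeRule_prod_unitCube hdet hf]

/-- For a random matrix `B` that is almost surely invertible and an independent
shift `v` uniformly distributed on `[0,1]^d`, and any `f ∈ L¹(ℝ^d)`, the series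
`Q_B^v(f) = |det B|⁻¹ ∑_{m ∈ ℤ^d} f(B^{-⊤}(m+v))` converges absolutely almost
surely, and its expectation is `∫ f`. -/
theorem stmt_14 {Ω : Type*} [MeasurableSpace Ω] (P : Measure Ω) [IsProbabilityMeasure P]
    (d : ℕ) (hd : 1 ≤ d)
    (B : Ω → Matrix (Fin d) (Fin d) ℝ) (v : Ω → (Fin d → ℝ))
    (hBmeas : Measurable B) (hvmeas : Measurable v)
    (hBinv : ∀ᵐ ω ∂P, IsUnit (B ω))
    (hvlaw : Measure.map v P = volume.restrict (Set.univ.pi fun _ : Fin d => Set.Icc (0:ℝ) 1))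
    (hindep : IndepFun B v P)
    (f : (Fin d → ℝ) → ℝ) (hf : Integrable f) :
    (∀ᵐ ω ∂P, Summable fun m : Fin d → ℤ =>
        |f (((B ω)⁻¹)ᵀ.mulVec ((fun i => (m i : ℝ)) + v ω))|) ∧
    (∫ ω, |(B ω).det|⁻¹ *
        ∑' m : Fin d → ℤ, f (((B ω)⁻¹)ᵀ.mulVec ((fun i => (m i : ℝ)) + v ω)) ∂P)
      = ∫ y, f y :=
  stmt_14_general P d B v hBmeas hvmeas hBinv hvlaw hindep f hf
end

section
/- Let x^(1),...,x^(n) be independent uniformly distributed points in [0,1]^d, P_n = {x^(1),...,x^(n)}, and dist the maximum metric on the d-torus. Then for p > 0, E[∫_{[0,1]^d} dist(x, P_n)^p dx] = 2^(−p) · n!/((p/d+1)(p/d+2)⋯(p/d+n)). -/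
open MeasureTheory ProbabilityTheory

/-- The torus metric `dist(x,y) = min_{k ∈ ℤ^d} ‖x + k - y‖_∞` on `[0,1]^d`
(here `‖·‖` is the sup-norm on `Fin d → ℝ`). -/
noncomputable def torusDist (d : ℕ) (x y : Fin d → ℝ) : ℝ :=
  ⨅ k : Fin d → ℤ, ‖(fun i => x i + k i - y i)‖

/-!
Project `[0,1]^d` onto the torus `(ℝ/ℤ)^d`. There `torusDist` is the sup-distance, and the uniform
law on the cube becomes Haar measure, under which a closed ball of radius `t ≤ 1/2` has volume
`(2t)^d`. For a fixed `x`, independence gives `P(dist(x, P_n) > t) = (1 - (2t)^d)^n`, so by the layer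
cake formula the `p`-th moment is `p ∫_0^{1/2} t^{p-1} (1 - (2t)^d)^n dt`. Expanding binomially
reduces this to `∑_k (-1)^k C(n,k)/(a+k) = n!/(a(a+1)⋯(a+n))` at `a = p/d`. The result does not
depend on `x`, so Fubini finishes the proof.
-/

open Set Metric Finset
open scoped Nat

def toTorus {ι : Type*} (x : ι → ℝ) : ι → UnitAddCircle := fun i => x i

theorem continuous_toTorus {ι : Type*} : Continuous (toTorus : (ι → ℝ) → ι → UnitAddCircle) :=
  continuous_pi fun i => continuous_quotient_mk'.comp (continuous_apply i)

theorem torusDist_eq_dist (d : ℕ) (x y : Fin d → ℝ) :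
    torusDist d x y = dist (toTorus x) (toTorus y) := by
  have hcoord : ∀ (k : Fin d → ℤ) i,
      ‖(toTorus x - toTorus y) i‖ = ‖((x i + k i - y i : ℝ) : UnitAddCircle)‖ := by
    simp [toTorus]
  rw [dist_eq_norm]
  apply le_antisymm
  · refine (ciInf_le ⟨0, forall_mem_range.2 fun _ => norm_nonneg _⟩
      fun i => -round (x i - y i)).trans ((pi_norm_le_iff_of_nonneg (norm_nonneg _)).2 fun i => ?_)
    refine le_of_eq_of_le ?_ (norm_le_pi_norm _ i)
    rw [hcoord 0 i, Pi.zero_apply, Int.cast_zero, add_zero, UnitAddCircle.norm_eq,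
      Real.norm_eq_abs, Int.cast_neg, ← sub_eq_add_neg, sub_right_comm]
  · refine le_ciInf fun k => (pi_norm_le_iff_of_nonneg (norm_nonneg _)).2 fun i => ?_
    rw [hcoord k i]
    exact QuotientAddGroup.norm_mk_le_norm.trans (norm_le_pi_norm (fun i => x i + k i - y i) i)

theorem torusDist_nonneg (d : ℕ) (x y : Fin d → ℝ) : 0 ≤ torusDist d x y := by
  rw [torusDist_eq_dist]
  exact dist_nonneg

theorem torusDist_le_half (d : ℕ) (x y : Fin d → ℝ) : torusDist d x y ≤ 1 / 2 := by
  rw [torusDist_eq_dist, dist_eq_norm]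
  refine (pi_norm_le_iff_of_nonneg (by norm_num)).2 fun i => ?_
  simpa using AddCircle.norm_le_half_period 1 one_ne_zero

theorem Measurable.torusDist {α : Type*} [MeasurableSpace α] {d : ℕ} {f g : α → Fin d → ℝ}
    (hf : Measurable f) (hg : Measurable g) : Measurable fun a => torusDist d (f a) (g a) := by
  simp only [torusDist_eq_dist]
  exact (continuous_toTorus.measurable.comp hf).dist (continuous_toTorus.measurable.comp hg)

theorem iInf_torusDist_mem_Icc {ι : Type*} [Nonempty ι] (d : ℕ) (x : Fin d → ℝ)
    (ys : ι → Fin d → ℝ) : ⨅ i, torusDist d x (ys i) ∈ Icc (0 : ℝ) (1 / 2) :=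
  ⟨Real.iInf_nonneg fun i => torusDist_nonneg d x (ys i),
    (ciInf_le ⟨0, forall_mem_range.2 fun i => torusDist_nonneg d x (ys i)⟩
      (Classical.arbitrary ι)).trans (torusDist_le_half d x _)⟩

instance : IsProbabilityMeasure (volume : Measure UnitAddCircle) := ⟨UnitAddCircle.measure_univ⟩

theorem measurePreserving_toTorus (ι : Type*) [Fintype ι] :
    MeasurePreserving (toTorus : (ι → ℝ) → ι → UnitAddCircle)
      (volume.restrict (univ.pi fun _ => Icc 0 1)) volume := by
  have hcube : volume.restrict (univ.pi fun _ : ι => Icc (0 : ℝ) 1)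
      = Measure.pi fun _ => volume.restrict (Ioc (0 : ℝ) (0 + 1)) := by
    rw [volume_pi, Measure.restrict_pi_pi, zero_add, Measure.restrict_congr_set Ioc_ae_eq_Icc]
  rw [hcube]
  exact measurePreserving_pi _ _ fun _ => UnitAddCircle.measurePreserving_mk 0

theorem volume_closedBall_torus {ι : Type*} [Fintype ι] (z : ι → UnitAddCircle) {t : ℝ}
    (ht : 0 ≤ t) : volume (closedBall z t) = ENNReal.ofReal (min 1 (2 * t)) ^ Fintype.card ι := by
  simp [volume_pi, Measure.pi_closedBall _ _ ht, AddCircle.volume_closedBall]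

theorem measure_lt_torusDist (d : ℕ) (x : Fin d → ℝ) {t : ℝ} (ht₀ : 0 ≤ t) (ht : t ≤ 1 / 2) :
    volume.restrict (univ.pi fun _ => Icc 0 1) {y | t < torusDist d x y}
      = ENNReal.ofReal (1 - (2 * t) ^ d) := by
  have hpre : {y | t < torusDist d x y} = toTorus ⁻¹' (closedBall (toTorus x) t)ᶜ := by
    ext y
    simp [torusDist_eq_dist, dist_comm]
  rw [hpre, (measurePreserving_toTorus (Fin d)).measure_preimage
      measurableSet_closedBall.compl.nullMeasurableSet, prob_compl_eq_one_sub measurableSet_closedBall,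
    volume_closedBall_torus _ ht₀, min_eq_right (by linarith), Fintype.card_fin,
    ENNReal.ofReal_sub _ (by positivity), ENNReal.ofReal_one, ENNReal.ofReal_pow (by positivity)]

theorem lt_ciInf_iff_of_finite {ι α : Type*} [Finite ι] [Nonempty ι]
    [ConditionallyCompleteLinearOrder α] {f : ι → α} {a : α} :
    a < ⨅ i, f i ↔ ∀ i, a < f i := by
  refine ⟨fun h i => h.trans_le (ciInf_le (finite_range f).bddBelow i), fun h => ?_⟩
  obtain ⟨i, hi⟩ := exists_eq_ciInf_of_finite (f := f)
  exact hi ▸ h i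

theorem ProbabilityTheory.iIndepFun.measure_iInter_preimage_eq_pow {Ω ι E : Type*}
    [MeasurableSpace Ω] [MeasurableSpace E] [Fintype ι] {P : Measure Ω} {X : ι → Ω → E}
    (hX : iIndepFun X P) (hmeas : ∀ i, Measurable (X i)) {μ : Measure E}
    (hlaw : ∀ i, P.map (X i) = μ) {B : Set E} (hB : MeasurableSet B) :
    P (⋂ i, X i ⁻¹' B) = μ B ^ Fintype.card ι := by
  rw [hX.meas_iInter fun i => ⟨B, hB, rfl⟩, ← Finset.card_univ, ← Finset.prod_const]
  exact Finset.prod_congr rfl fun i _ => by rw [← hlaw i, Measure.map_apply (hmeas i) hB]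

theorem measure_lt_iInf_torusDist {Ω : Type*} [MeasurableSpace Ω] {P : Measure Ω} {d n : ℕ}
    [NeZero n] {X : Fin n → Ω → (Fin d → ℝ)} (hmeas : ∀ i, Measurable (X i))
    (hindep : iIndepFun X P)
    (hlaw : ∀ i, P.map (X i) = volume.restrict (univ.pi fun _ => Icc 0 1))
    (x : Fin d → ℝ) {t : ℝ} (ht₀ : 0 ≤ t) (ht : t ≤ 1 / 2) :
    P {ω | t < ⨅ i, torusDist d x (X i ω)} = ENNReal.ofReal ((1 - (2 * t) ^ d) ^ n) := by
  have hB : MeasurableSet {y | t < torusDist d x y} :=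
    measurableSet_lt measurable_const (measurable_const.torusDist measurable_id)
  have hset : {ω | t < ⨅ i, torusDist d x (X i ω)} = ⋂ i, X i ⁻¹' {y | t < torusDist d x y} := by
    ext ω
    simp [lt_ciInf_iff_of_finite]
  have h2t : (2 * t) ^ d ≤ 1 := pow_le_one₀ (by positivity) (by linarith)
  rw [hset, hindep.measure_iInter_preimage_eq_pow hmeas hlaw hB, measure_lt_torusDist d x ht₀ ht,
    Fintype.card_fin, ENNReal.ofReal_pow (by linarith)]

theorem integral_rpow_eq_integral_Ioi_mul_measureReal_lt {α : Type*} [MeasurableSpace α]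
    {μ : Measure α} [IsFiniteMeasure μ] {Y : α → ℝ} (hY₀ : 0 ≤ᵐ[μ] Y) (hY : AEMeasurable Y μ)
    {p : ℝ} (hp : 0 < p) :
    ∫ a, Y a ^ p ∂μ = p * ∫ t in Ioi 0, t ^ (p - 1) * μ.real {a | t < Y a} := by
  have htail : Measurable fun t : ℝ => μ.real {a | t < Y a} :=
    Antitone.measurable fun s t hst => measureReal_mono fun a (h : t < Y a) => hst.trans_lt h
  rw [integral_eq_lintegral_of_nonneg_ae (hY₀.mono fun a ha => Real.rpow_nonneg ha p)
      (hY.pow_const p).aestronglyMeasurable,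
    lintegral_rpow_eq_lintegral_meas_lt_mul μ hY₀ hY hp,
    integral_eq_lintegral_of_nonneg_ae ?_ ?_, ENNReal.toReal_mul, ENNReal.toReal_ofReal hp.le]
  · congr 2
    refine setLIntegral_congr_fun measurableSet_Ioi fun t ht => ?_
    rw [ENNReal.ofReal_mul (Real.rpow_nonneg (le_of_lt ht) _), ofReal_measureReal, mul_comm]
  · exact (ae_restrict_iff' measurableSet_Ioi).2 (Filter.Eventually.of_forall fun t ht =>
      mul_nonneg (Real.rpow_nonneg (le_of_lt ht) _) measureReal_nonneg)
  · exact ((measurable_id.pow_const _).mul htail).aestronglyMeasurable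

theorem integral_rpow_eq_integral_Ioc_mul_measureReal_lt {α : Type*} [MeasurableSpace α]
    {μ : Measure α} [IsFiniteMeasure μ] {Y : α → ℝ} (hY₀ : 0 ≤ᵐ[μ] Y) (hY : AEMeasurable Y μ)
    {M : ℝ} (hYM : ∀ᵐ a ∂μ, Y a ≤ M) {p : ℝ} (hp : 0 < p) :
    ∫ a, Y a ^ p ∂μ = p * ∫ t in Ioc 0 M, t ^ (p - 1) * μ.real {a | t < Y a} := by
  rw [integral_rpow_eq_integral_Ioi_mul_measureReal_lt hY₀ hY hp,
    setIntegral_eq_of_subset_of_ae_sdiff_eq_zero nullMeasurableSet_Ioi Ioc_subset_Ioi_self]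
  refine Filter.Eventually.of_forall fun t ht => ?_
  have hMt : M < t := by simp_all
  have hnull : μ {a | t < Y a} = 0 :=
    measure_mono_null (fun a (ha : t < Y a) => not_le.2 (hMt.trans ha)) (ae_iff.1 hYM)
  rw [measureReal_def, hnull, ENNReal.toReal_zero, mul_zero]

theorem sum_range_choose_mul_neg_one_pow_div (n : ℕ) {a : ℝ} (ha : 0 < a) :
    ∑ k ∈ range (n + 1), (n.choose k : ℝ) * ((-1) ^ k / (a + k))
      = n ! / ∏ j ∈ range (n + 1), (a + j) := by
  induction n generalizing a with
  | zero => simp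
  | succ n ih =>
    -- Pascal's rule turns the sum at `(n + 1, a)` into the sums at `(n, a)` minus `(n, a + 1)`.
    have hpascal := sum_choose_succ_mul (fun k _ => (-1 : ℝ) ^ k / (a + k)) n
    have hshift : ∀ k : ℕ, (-1 : ℝ) ^ (k + 1) / (a + ↑(k + 1)) = -((-1) ^ k / (a + 1 + k)) := by
      intro k
      push_cast
      ring
    simp only [hshift, mul_neg, sum_neg_distrib] at hpascal
    have htop : ∏ j ∈ range (n + 2), (a + j) = (∏ j ∈ range (n + 1), (a + j)) * (a + (n + 1)) := by
      rw [prod_range_succ]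
      push_cast
      ring
    have hbot : ∏ j ∈ range (n + 2), (a + j) = (∏ j ∈ range (n + 1), (a + 1 + j)) * a := by
      rw [prod_range_succ']
      push_cast
      simp only [add_assoc, add_comm (1 : ℝ)]
      ring
    have hA : 0 < ∏ j ∈ range (n + 1), (a + j) := prod_pos fun j _ => by positivity
    have hB : 0 < ∏ j ∈ range (n + 1), (a + 1 + j) := prod_pos fun j _ => by positivity
    rw [hpascal, ih ha, ih (by linarith), ← sub_eq_add_neg, Nat.factorial_succ,
      div_sub_div _ _ hA.ne' hB.ne', div_eq_div_iff (by positivity) (by positivity)]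
    push_cast
    linear_combination (n ! * ∏ j ∈ range (n + 1), (a + 1 + j) : ℝ) * htop
      - (n ! * ∏ j ∈ range (n + 1), (a + j) : ℝ) * hbot

theorem sum_range_choose_mul_neg_one_pow_div_add_mul {d : ℕ} (hd : 0 < d) (n : ℕ) {p : ℝ}
    (hp : 0 < p) :
    ∑ k ∈ range (n + 1), (n.choose k : ℝ) * ((-1) ^ k / (p + d * k))
      = n ! / (p * ∏ j ∈ Icc 1 n, (p / d + j)) := by
  have hd' : (0 : ℝ) < d := by exact_mod_cast hd
  have ha : 0 < p / d := by positivity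
  have hsummand : ∀ k : ℕ, (n.choose k : ℝ) * ((-1) ^ k / (p + d * k))
      = (d : ℝ)⁻¹ * (n.choose k * ((-1) ^ k / (p / d + k))) := by
    intro k
    field_simp
  have hprod : ∏ j ∈ range (n + 1), (p / d + j) = p / d * ∏ j ∈ Icc 1 n, (p / d + j) := by
    rw [prod_range_succ', ← Finset.Ico_add_one_right_eq_Icc, prod_Ico_eq_prod_range,
      Nat.add_sub_cancel]
    push_cast
    simp only [add_comm (1 : ℝ), add_zero, mul_comm (p / d)]
  simp only [hsummand, ← mul_sum, sum_range_choose_mul_neg_one_pow_div n ha, hprod]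
  have hQ : 0 < ∏ j ∈ Icc 1 n, (p / d + j) := prod_pos fun j _ => by positivity
  field_simp

theorem integral_rpow_mul_one_sub_pow_pow {d : ℕ} (hd : 0 < d) (n : ℕ) {p : ℝ} (hp : 0 < p) :
    ∫ s in (0 : ℝ)..1, s ^ (p - 1) * (1 - s ^ d) ^ n
      = n ! / (p * ∏ j ∈ Icc 1 n, (p / d + j)) := by
  have hexp : ∀ k : ℕ, -1 < p - 1 + (d * k : ℕ) := fun k => by
    have : (0 : ℝ) ≤ (d * k : ℕ) := Nat.cast_nonneg _
    linarith
  have hbinom : ∀ s ∈ uIoc (0 : ℝ) 1, s ^ (p - 1) * (1 - s ^ d) ^ n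
      = ∑ k ∈ range (n + 1), (n.choose k * (-1) ^ k) * s ^ (p - 1 + (d * k : ℕ)) := by
    intro s hs
    have hs0 : 0 < s := by simp_all
    rw [show 1 - s ^ d = -s ^ d + 1 by ring, add_pow, mul_sum]
    refine sum_congr rfl fun k _ => ?_
    rw [Real.rpow_add hs0, Real.rpow_natCast, one_pow, pow_mul, neg_pow]
    ring
  have hterm : ∀ k : ℕ, ∫ s in (0 : ℝ)..1, s ^ (p - 1 + (d * k : ℕ)) = 1 / (p + d * k) := by
    intro k
    rw [integral_rpow (Or.inl (hexp k)), Real.one_rpow, Real.zero_rpow (by linarith [hexp k])]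
    push_cast
    ring_nf
  rw [intervalIntegral.integral_congr_ae (Filter.Eventually.of_forall hbinom),
    intervalIntegral.integral_finsetSum fun k _ =>
      (intervalIntegral.intervalIntegrable_rpow' (hexp k)).const_mul _]
  simp only [intervalIntegral.integral_const_mul, hterm, mul_one_div, mul_div_assoc]
  exact sum_range_choose_mul_neg_one_pow_div_add_mul hd n hp

theorem integral_rpow_mul_comp_mul_left (f : ℝ → ℝ) {b c p : ℝ} (hb : 0 ≤ b) (hc : 0 < c) :
    ∫ t in (0 : ℝ)..b, t ^ (p - 1) * f (c * t)
      = c ^ (-p) * ∫ s in (0 : ℝ)..c * b, s ^ (p - 1) * f s := by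
  have hscale : EqOn (fun t => t ^ (p - 1) * f (c * t))
      (fun t => c ^ (1 - p) * ((c * t) ^ (p - 1) * f (c * t))) (uIcc 0 b) := by
    intro t ht
    rw [uIcc_of_le hb] at ht
    dsimp only
    rw [Real.mul_rpow hc.le ht.1, ← mul_assoc, ← mul_assoc, ← Real.rpow_add hc]
    simp
  rw [intervalIntegral.integral_congr hscale, intervalIntegral.integral_const_mul,
    intervalIntegral.integral_comp_mul_left (fun s => s ^ (p - 1) * f s) hc.ne', mul_zero,
    smul_eq_mul, ← mul_assoc, ← Real.rpow_neg_one, ← Real.rpow_add hc]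
  ring_nf

theorem integral_iInf_torusDist_rpow {Ω : Type*} [MeasurableSpace Ω] {P : Measure Ω}
    [IsProbabilityMeasure P] {d n : ℕ} (hd : 0 < d) [NeZero n] {X : Fin n → Ω → (Fin d → ℝ)}
    (hmeas : ∀ i, Measurable (X i)) (hindep : iIndepFun X P)
    (hlaw : ∀ i, P.map (X i) = volume.restrict (univ.pi fun _ => Icc 0 1))
    (x : Fin d → ℝ) {p : ℝ} (hp : 0 < p) :
    ∫ ω, (⨅ i, torusDist d x (X i ω)) ^ p ∂P = 2 ^ (-p) * n ! / ∏ j ∈ Icc 1 n, (p / d + j) := by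
  have hY : Measurable fun ω => ⨅ i, torusDist d x (X i ω) :=
    Measurable.iInf fun i => measurable_const.torusDist (hmeas i)
  have htail : EqOn (fun t => t ^ (p - 1) * P.real {ω | t < ⨅ i, torusDist d x (X i ω)})
      (fun t => t ^ (p - 1) * (1 - (2 * t) ^ d) ^ n) (Ioc 0 (1 / 2)) := by
    intro t ht
    have h2t : (2 * t) ^ d ≤ 1 := pow_le_one₀ (by linarith [ht.1]) (by linarith [ht.2])
    simp only [measureReal_def, measure_lt_iInf_torusDist hmeas hindep hlaw x ht.1.le ht.2,
      ENNReal.toReal_ofReal (pow_nonneg (sub_nonneg.2 h2t) n)]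
  rw [integral_rpow_eq_integral_Ioc_mul_measureReal_lt
      (ae_of_all _ fun ω => (iInf_torusDist_mem_Icc d x _).1) hY.aemeasurable
      (ae_of_all _ fun ω => (iInf_torusDist_mem_Icc d x _).2) hp,
    setIntegral_congr_fun measurableSet_Ioc htail, ← intervalIntegral.integral_of_le (by norm_num),
    integral_rpow_mul_comp_mul_left (fun s => (1 - s ^ d) ^ n) (by norm_num) two_pos,
    mul_one_div_cancel two_ne_zero, integral_rpow_mul_one_sub_pow_pow hd n hp]
  have hQ : 0 < ∏ j ∈ Icc 1 n, (p / d + j) := prod_pos fun j _ => by positivity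
  field_simp

/-- For `n` independent uniform random points `X 0, ..., X (n-1)` in `[0,1]^d` and
`p > 0`, the expected value of `∫_{[0,1]^d} dist(x, P_n)^p dx` (with the torus
maximum metric) equals `2^{-p} n! / ((p/d+1)(p/d+2)⋯(p/d+n))`. -/
theorem stmt_19 {Ω : Type*} [MeasurableSpace Ω] (P : Measure Ω) [IsProbabilityMeasure P]
    (d n : ℕ) (hd : 1 ≤ d) (hn : 1 ≤ n) (p : ℝ) (hp : 0 < p)
    (X : Fin n → Ω → (Fin d → ℝ)) (hmeas : ∀ i, Measurable (X i))
    (hindep : iIndepFun X P)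
    (hlaw : ∀ i, Measure.map (X i) P
      = volume.restrict (Set.univ.pi fun _ : Fin d => Set.Icc (0:ℝ) 1)) :
    (∫ ω, (∫ x in Set.univ.pi fun _ : Fin d => Set.Icc (0:ℝ) 1,
        (⨅ i : Fin n, torusDist d x (X i ω)) ^ p) ∂P)
      = (2 : ℝ) ^ (-p) * (Nat.factorial n) / ∏ j ∈ Finset.Icc 1 n, (p / d + j) := by
  have : NeZero n := ⟨by omega⟩
  have : IsProbabilityMeasure (volume.restrict (univ.pi fun _ : Fin d => Icc (0 : ℝ) 1)) := by
    rw [← hlaw ⟨0, by omega⟩]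
    exact Measure.isProbabilityMeasure_map (hmeas _).aemeasurable
  have hF : Measurable fun q : Ω × (Fin d → ℝ) => (⨅ i, torusDist d q.2 (X i q.1)) ^ p :=
    (Measurable.iInf fun i => measurable_snd.torusDist ((hmeas i).comp measurable_fst)).pow_const p
  have hint : Integrable (Function.uncurry fun ω (x : Fin d → ℝ) => (⨅ i, torusDist d x (X i ω)) ^ p)
      (P.prod (volume.restrict (univ.pi fun _ => Icc 0 1))) := by
    refine Integrable.of_bound hF.aestronglyMeasurable 1 (ae_of_all _ fun q => ?_)
    obtain ⟨hY₀, hY⟩ := iInf_torusDist_mem_Icc d q.2 fun i => X i q.1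
    change ‖(⨅ i, torusDist d q.2 (X i q.1)) ^ p‖ ≤ 1
    rw [Real.norm_of_nonneg (Real.rpow_nonneg hY₀ p)]
    exact Real.rpow_le_one hY₀ (by linarith) hp.le
  rw [integral_integral_swap hint]
  simp only [integral_iInf_torusDist_rpow hd hmeas hindep hlaw _ hp]
  rw [integral_const, probReal_univ, one_smul]
end
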